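/- arXiv:math/0411341 — 7 statements merged into one kernel-verified Lean document; each statement's English description precedes it below -/
import Mathlib

section
/- Let B be an n×n skew-symmetrizable integer matrix and A a positive quasi-Cartan companion of B. Then for every chordless cycle in Γ(B), labeled z_1,…,z_p (indices mod p) so that the edges among its vertices are exactly {z_i, z_{i+1}}, the product ∏_{i ∈ ℤ/pℤ} (−A_{z_i z_{i+1}}) is negative. -/
open Matrix

/-- `B` is skew-symmetrizable: `DB` is skew-symmetric for some diagonal matrix `D`
with positive diagonal entries `d`. -/
def IsSkewSymmetrizable {n : ℕ} (B : Matrix (Fin n) (Fin n) ℤ) : Prop :=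
  ∃ d : Fin n → ℤ, (∀ i, 0 < d i) ∧ ∀ i j, d i * B i j = -(d j * B j i)

/-- `A` is a quasi-Cartan matrix: all diagonal entries equal `2`, and `DA` is symmetric
for some diagonal matrix `D` with positive diagonal entries. -/
def IsQuasiCartan {n : ℕ} (A : Matrix (Fin n) (Fin n) ℤ) : Prop :=
  (∀ i, A i i = 2) ∧ ∃ d : Fin n → ℤ, (∀ i, 0 < d i) ∧ ∀ i j, d i * A i j = d j * A j i

/-- `A` is a positive quasi-Cartan matrix: a quasi-Cartan matrix whose symmetrization `DA`
is positive definite. -/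
def IsPositiveQuasiCartan {n : ℕ} (A : Matrix (Fin n) (Fin n) ℤ) : Prop :=
  (∀ i, A i i = 2) ∧ ∃ d : Fin n → ℤ, (∀ i, 0 < d i) ∧ (∀ i j, d i * A i j = d j * A j i) ∧
    Matrix.PosDef (Matrix.of fun i j => ((d i * A i j : ℤ) : ℝ))

/-- `A` is a quasi-Cartan companion of `B`: a quasi-Cartan matrix with `|A i j| = |B i j|`
for all `i ≠ j`. -/
def IsQuasiCartanCompanion {n : ℕ} (B A : Matrix (Fin n) (Fin n) ℤ) : Prop :=
  IsQuasiCartan A ∧ ∀ i j, i ≠ j → |A i j| = |B i j|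

/-- `z : ZMod p → Fin n` is a labeling of a chordless cycle of the (underlying undirected)
graph `Γ(B)`: `p ≥ 3` distinct vertices whose induced edges (`B i j ≠ 0`) are exactly the
consecutive pairs. -/
def IsChordlessCycle {n : ℕ} (B : Matrix (Fin n) (Fin n) ℤ) (p : ℕ) (z : ZMod p → Fin n) : Prop :=
  3 ≤ p ∧ Function.Injective z ∧
    ∀ i j : ZMod p, i ≠ j → (B (z i) (z j) ≠ 0 ↔ (j = i + 1 ∨ i = j + 1))

/-- Every chordless cycle in `Γ(B)` is cyclically oriented: its labeling can be chosen
(with the same vertex set) so that `B (z i) (z (i+1)) > 0` for all `i`. -/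
def AllChordlessCyclesCyclicallyOriented {n : ℕ} (B : Matrix (Fin n) (Fin n) ℤ) : Prop :=
  ∀ (p : ℕ) (z : ZMod p → Fin n), IsChordlessCycle B p z →
    ∃ z' : ZMod p → Fin n, Set.range z' = Set.range z ∧ IsChordlessCycle B p z' ∧
      ∀ i : ZMod p, 0 < B (z' i) (z' (i + 1))

/-- Matrix mutation `μ_k`. -/
def mutate {n : ℕ} (B : Matrix (Fin n) (Fin n) ℤ) (k : Fin n) : Matrix (Fin n) (Fin n) ℤ :=
  Matrix.of fun i j =>
    if i = k ∨ j = k then -B i j else B i j + (B i k).sign * max (B i k * B k j) 0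

/-- `B'` is obtained from `B` by a finite sequence of mutations. -/
def MutationEquiv {n : ℕ} (B B' : Matrix (Fin n) (Fin n) ℤ) : Prop :=
  ∃ l : List (Fin n), B' = l.foldl mutate B


private lemma sign_mul_self' (x : ℤ) : x.sign * x = |x| := by
  rcases lt_trichotomy x 0 with h | h | h
  · rw [Int.sign_eq_neg_one_iff_neg.mpr h, abs_of_neg h]; ring
  · simp [h]
  · rw [Int.sign_eq_one_iff_pos.mpr h, abs_of_pos h]; ring

private lemma sign_sq' (x : ℤ) (h : x ≠ 0) : x.sign * x.sign = 1 := by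
  rcases lt_trichotomy x 0 with h' | h' | h'
  · rw [Int.sign_eq_neg_one_iff_neg.mpr h']; ring
  · exact absurd h' h
  · rw [Int.sign_eq_one_iff_pos.mpr h']; ring

private lemma prod_sign' (m : ℕ) (f : ℕ → ℤ) :
    ∏ k ∈ Finset.range m, (f k).sign = (∏ k ∈ Finset.range m, f k).sign := by
  induction m with
  | zero => simp
  | succ m ih => rw [Finset.prod_range_succ, Finset.prod_range_succ, Int.sign_mul, ih]

private lemma prod_sign_sq' (m : ℕ) (f : ℕ → ℤ) (h : ∀ k, f k ≠ 0) :
    (∏ k ∈ Finset.range m, (f k).sign) * (∏ k ∈ Finset.range m, (f k).sign) = 1 := by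
  rw [← Finset.prod_mul_distrib]
  exact Finset.prod_eq_one (fun k _ => sign_sq' _ (h k))

private lemma exists_sign' (p : ℕ) [NeZero p] (hp : Fact (1 < p)) (a : ZMod p → ℤ)
    (hne : ∀ i, a i ≠ 0) (hpos : 0 < ∏ k ∈ Finset.range p, (-(a (k : ZMod p)))) :
    ∃ ε : ZMod p → ℤ, (∀ i, ε i * ε i = 1) ∧
      ∀ i : ZMod p, (ε i * ε (i + 1)) * a i = -|a i| := by
  have hne' : ∀ k : ℕ, -(a (k : ZMod p)) ≠ 0 := fun k => neg_ne_zero.mpr (hne _)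
  refine ⟨fun i => ∏ k ∈ Finset.range i.val, (-(a (k : ZMod p))).sign, ?_, ?_⟩
  · intro i; exact prod_sign_sq' _ _ hne'
  · intro i
    have key : (∏ k ∈ Finset.range i.val, (-(a (k : ZMod p))).sign) *
        (∏ k ∈ Finset.range (i + 1).val, (-(a (k : ZMod p))).sign) = (-(a i)).sign := by
      have hv : i.val < p := ZMod.val_lt i
      have hvi : ((i.val : ℕ) : ZMod p) = i := ZMod.natCast_rightInverse i
      have hval : (i + 1).val = (i.val + 1) % p := by rw [ZMod.val_add, ZMod.val_one]
      rcases lt_or_eq_of_le (Nat.succ_le_of_lt hv) with h | h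
      · have hval' : (i + 1).val = i.val + 1 := by rw [hval, Nat.mod_eq_of_lt h]
        rw [hval', Finset.prod_range_succ, ← mul_assoc, prod_sign_sq' _ _ hne', one_mul, hvi]
      · have h' : i.val + 1 = p := h
        have hval' : (i + 1).val = 0 := by rw [hval, h', Nat.mod_self]
        rw [hval', Finset.prod_range_zero, mul_one]
        have h1 : (∏ k ∈ Finset.range i.val, (-(a (k : ZMod p))).sign) *
            (-(a ((i.val : ℕ) : ZMod p))).sign = 1 := by
          rw [← Finset.prod_range_succ (fun k => (-(a (k : ZMod p))).sign) i.val, h',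
            prod_sign' p _, Int.sign_eq_one_iff_pos.mpr hpos]
        have hs : (-(a ((i.val : ℕ) : ZMod p))).sign * (-(a ((i.val : ℕ) : ZMod p))).sign = 1 :=
          sign_sq' _ (hne' _)
        calc (∏ k ∈ Finset.range i.val, (-(a (k : ZMod p))).sign)
            = (∏ k ∈ Finset.range i.val, (-(a (k : ZMod p))).sign) *
              ((-(a ((i.val : ℕ) : ZMod p))).sign * (-(a ((i.val : ℕ) : ZMod p))).sign) := by
                rw [hs, mul_one]
          _ = ((∏ k ∈ Finset.range i.val, (-(a (k : ZMod p))).sign) *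
              (-(a ((i.val : ℕ) : ZMod p))).sign) * (-(a ((i.val : ℕ) : ZMod p))).sign := by ring
          _ = (-(a ((i.val : ℕ) : ZMod p))).sign := by rw [h1, one_mul]
          _ = (-(a i)).sign := by rw [hvi]
    rw [key, Int.sign_neg, neg_mul, sign_mul_self']

/-- If `A` is a positive quasi-Cartan companion of a skew-symmetrizable `B`,
then for every chordless cycle in `Γ(B)` the product `∏ (-A (z i) (z (i+1)))` over the edges
of the cycle is negative. -/
theorem statement3 {n : ℕ} (B A : Matrix (Fin n) (Fin n) ℤ) (hB : IsSkewSymmetrizable B)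
    (hA : IsQuasiCartanCompanion B A) (hApos : IsPositiveQuasiCartan A)
    (p : ℕ) (z : ZMod p → Fin n) (hz : IsChordlessCycle B p z) :
    (∏ i ∈ Finset.range p, (-(A (z (i : ZMod p)) (z ((i : ZMod p) + 1))))) < 0 := by
  obtain ⟨hz3, hzinj, hze⟩ := hz
  obtain ⟨-, hcomp⟩ := hA
  obtain ⟨hdiag, d, hdpos, hsym, hposdef⟩ := hApos
  haveI : NeZero p := ⟨by omega⟩
  haveI hfact : Fact (1 < p) := ⟨by omega⟩
  by_contra hcon
  push_neg at hcon
  have hone : (1 : ZMod p) ≠ 0 := one_ne_zero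
  have htwo : (2 : ZMod p) ≠ 0 := by
    intro h
    have h2 : ((2 : ℕ) : ZMod p) = 0 := by exact_mod_cast h
    have := (ZMod.natCast_eq_zero_iff 2 p).mp h2
    have := Nat.le_of_dvd (by norm_num) this
    omega
  have hne1 : ∀ i : ZMod p, i ≠ i + 1 := by
    intro i h; exact hone (left_eq_add.mp h)
  have hcompz : ∀ i j : ZMod p, i ≠ j → |A (z i) (z j)| = |B (z i) (z j)| := by
    intro i j hij; exact hcomp _ _ (fun h' => hij (hzinj h'))
  have hAne : ∀ i : ZMod p, A (z i) (z (i + 1)) ≠ 0 := by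
    intro i h
    have hBne : B (z i) (z (i + 1)) ≠ 0 := (hze i (i + 1) (hne1 i)).mpr (Or.inl rfl)
    have := hcompz i (i + 1) (hne1 i)
    rw [h] at this
    exact hBne (abs_eq_zero.mp this.symm)
  have hA'ne : ∀ i : ZMod p, A (z (i + 1)) (z i) ≠ 0 := by
    intro i h
    have hBne : B (z (i + 1)) (z i) ≠ 0 :=
      (hze (i + 1) i (fun h' => hne1 i h'.symm)).mpr (Or.inr rfl)
    have := hcompz (i + 1) i (fun h' => hne1 i h'.symm)
    rw [h] at this
    exact hBne (abs_eq_zero.mp this.symm)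
  have hA0 : ∀ i j : ZMod p, i ≠ j → j ≠ i + 1 → i ≠ j + 1 → A (z i) (z j) = 0 := by
    intro i j h1 h2 h3
    have hB0 : B (z i) (z j) = 0 := by
      by_contra h
      rcases (hze i j h1).mp h with h' | h' <;> tauto
    have := hcompz i j h1
    rw [hB0] at this; simpa using this
  have hprodpos : 0 < ∏ i ∈ Finset.range p, (-(A (z (i : ZMod p)) (z ((i : ZMod p) + 1)))) := by
    rcases lt_or_eq_of_le hcon with h | h
    · exact h
    · exact absurd h.symm (Finset.prod_ne_zero_iff.mpr
        (fun i _ => neg_ne_zero.mpr (hAne (i : ZMod p))))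
  obtain ⟨ε, hε2, hεa⟩ := exists_sign' p hfact (fun i => A (z i) (z (i + 1))) hAne hprodpos
  -- the test vector
  set M : Matrix (Fin n) (Fin n) ℝ := Matrix.of fun i j => ((d i * A i j : ℤ) : ℝ) with hM
  have hMapp : ∀ a b : Fin n, M a b = ((d a * A a b : ℤ) : ℝ) := fun a b => rfl
  set t : ZMod p → ℝ := fun i => (ε i : ℝ) / Real.sqrt (d (z i)) with ht
  set x : Fin n → ℝ := fun b => ∑ i : ZMod p, if z i = b then t i else 0 with hx
  have hdposR : ∀ i : ZMod p, (0 : ℝ) < (d (z i) : ℝ) := fun i => by exact_mod_cast hdpos (z i)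
  have hsqrtpos : ∀ i : ZMod p, (0 : ℝ) < Real.sqrt (d (z i)) :=
    fun i => Real.sqrt_pos.mpr (hdposR i)
  have hxz : ∀ i : ZMod p, x (z i) = t i := by
    intro i
    show (∑ j : ZMod p, if z j = z i then t j else 0) = t i
    calc (∑ j : ZMod p, if z j = z i then t j else 0)
        = ∑ j : ZMod p, if j = i then t j else 0 := Finset.sum_congr rfl (fun j _ => by
          by_cases hj : j = i
          · simp [hj]
          · rw [if_neg hj, if_neg (fun h => hj (hzinj h))])
      _ = t i := by rw [Finset.sum_ite_eq']; simp
  have hxne : x ≠ 0 := by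
    intro h
    have h0 : x (z 0) = 0 := by rw [h]; rfl
    rw [hxz 0] at h0
    have hε0 : ε 0 ≠ 0 := fun h' => by have := hε2 0; rw [h'] at this; simp at this
    have hε0' : (ε 0 : ℝ) ≠ 0 := Int.cast_ne_zero.mpr hε0
    exact div_ne_zero hε0' (ne_of_gt (hsqrtpos 0)) h0
  -- collapse lemma
  have collapse : ∀ g : Fin n → ℝ, (∑ b, x b * g b) = ∑ i : ZMod p, t i * g (z i) := by
    intro g
    calc (∑ b, x b * g b)
        = ∑ b, ∑ i : ZMod p, (if z i = b then t i else 0) * g b := by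
          refine Finset.sum_congr rfl (fun b _ => ?_)
          rw [show x b = ∑ i : ZMod p, (if z i = b then t i else 0) from rfl, Finset.sum_mul]
      _ = ∑ i : ZMod p, ∑ b, (if z i = b then t i else 0) * g b := Finset.sum_comm
      _ = ∑ i : ZMod p, t i * g (z i) := by
          refine Finset.sum_congr rfl (fun i _ => ?_)
          simp [ite_mul, Finset.sum_ite_eq]
  -- quadratic form
  have hq : x ⬝ᵥ M *ᵥ x = ∑ i : ZMod p, t i * ∑ j : ZMod p, t j * M (z i) (z j) := by
    rw [dotProduct, collapse]
    refine Finset.sum_congr rfl (fun i _ => ?_)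
    congr 1
    show M (z i) ⬝ᵥ x = _
    rw [dotProduct]
    rw [show (∑ c, M (z i) c * x c) = ∑ c, x c * M (z i) c from
      Finset.sum_congr rfl (fun c _ => mul_comm _ _)]
    rw [collapse (fun c => M (z i) c)]
  have hqpos : 0 < x ⬝ᵥ M *ᵥ x := by
    have := (Matrix.posDef_iff_dotProduct_mulVec.mp hposdef).2 hxne
    simpa using this
  -- restrict inner sum to the three neighbors
  have h13 : ∀ i : ZMod p, i ≠ i - 1 := by
    intro i h
    exact hone (sub_eq_self.mp h.symm)
  have h23 : ∀ i : ZMod p, i + 1 ≠ i - 1 := by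
    intro i h
    have h2 : i + 2 = i + 0 := by
      rw [add_zero]
      calc i + 2 = (i + 1) + 1 := by ring
        _ = (i - 1) + 1 := by rw [h]
        _ = i := by ring
    exact htwo (add_left_cancel h2)
  have hinner : ∀ i : ZMod p, (∑ j : ZMod p, t j * M (z i) (z j)) =
      t i * M (z i) (z i) + t (i + 1) * M (z i) (z (i + 1)) + t (i - 1) * M (z i) (z (i - 1)) := by
    intro i
    have hsub : (∑ j : ZMod p, t j * M (z i) (z j)) =
        ∑ j ∈ ({i, i + 1, i - 1} : Finset (ZMod p)), t j * M (z i) (z j) := by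
      symm
      apply Finset.sum_subset (Finset.subset_univ _)
      intro j _ hj
      simp only [Finset.mem_insert, Finset.mem_singleton] at hj
      push_neg at hj
      obtain ⟨hj1, hj2, hj3⟩ := hj
      have h3 : i ≠ j + 1 := fun h => hj3 (by rw [h]; ring)
      have hz0 : A (z i) (z j) = 0 := hA0 i j (fun h => hj1 h.symm) (fun h => hj2 h) h3
      rw [hMapp, hz0]
      simp
    rw [hsub]
    rw [Finset.sum_insert (by
        simp only [Finset.mem_insert, Finset.mem_singleton]
        push_neg
        exact ⟨hne1 i, h13 i⟩),
      Finset.sum_insert (by simp only [Finset.mem_singleton]; exact h23 i),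
      Finset.sum_singleton]
    ring
  -- reindex the third term
  have hshift : (∑ i : ZMod p, t i * (t (i - 1) * M (z i) (z (i - 1)))) =
      ∑ i : ZMod p, t (i + 1) * (t i * M (z (i + 1)) (z i)) := by
    symm
    apply Fintype.sum_equiv (Equiv.addRight (1 : ZMod p))
    intro i
    simp only [Equiv.coe_addRight]
    rw [add_sub_cancel_right]
  have hMsym : ∀ i : ZMod p, M (z (i + 1)) (z i) = M (z i) (z (i + 1)) := by
    intro i
    rw [hMapp, hMapp]
    exact_mod_cast hsym (z (i + 1)) (z i)
  -- final per-term computation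
  have hfinal : x ⬝ᵥ M *ᵥ x =
      ∑ i : ZMod p, (t i * (t i * M (z i) (z i)) + 2 * (t i * (t (i + 1) * M (z i) (z (i + 1))))) := by
    rw [hq]
    rw [Finset.sum_congr rfl (fun i _ => by rw [hinner i, mul_add, mul_add])]
    rw [Finset.sum_add_distrib, Finset.sum_add_distrib]
    rw [show (∑ i : ZMod p, t i * (t (i - 1) * M (z i) (z (i - 1)))) =
        ∑ i : ZMod p, t i * (t (i + 1) * M (z i) (z (i + 1))) by
      rw [hshift]
      refine Finset.sum_congr rfl (fun i _ => ?_)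
      rw [hMsym i]; ring]
    rw [← Finset.sum_add_distrib, ← Finset.sum_add_distrib]
    refine Finset.sum_congr rfl (fun i _ => ?_)
    ring
  have hterm : ∀ i : ZMod p,
      t i * (t i * M (z i) (z i)) + 2 * (t i * (t (i + 1) * M (z i) (z (i + 1)))) ≤ 0 := by
    intro i
    have hDine : ((d (z i) : ℝ)) ≠ 0 := ne_of_gt (hdposR i)
    have hsi : Real.sqrt (d (z i)) * Real.sqrt (d (z i)) = (d (z i) : ℝ) :=
      Real.mul_self_sqrt (le_of_lt (hdposR i))
    have hee : (ε i : ℝ) * (ε i : ℝ) = 1 := by exact_mod_cast hε2 i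
    have hMii : M (z i) (z i) = 2 * (d (z i) : ℝ) := by
      rw [hMapp, hdiag]; push_cast; ring
    have htt : t i * t i = 1 / (d (z i) : ℝ) := by
      show ((ε i : ℝ) / Real.sqrt (d (z i))) * ((ε i : ℝ) / Real.sqrt (d (z i))) = _
      rw [div_mul_div_comm, hee, hsi]
    have e1 : t i * (t i * M (z i) (z i)) = 2 := by
      rw [hMii, show t i * (t i * (2 * (d (z i) : ℝ))) = (t i * t i) * (2 * (d (z i) : ℝ))
        from by ring, htt]
      field_simp
    have hnumZ : ε i * (ε (i + 1) * (d (z i) * A (z i) (z (i + 1)))) =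
        -(d (z i) * |A (z i) (z (i + 1))|) := by
      linear_combination d (z i) * hεa i
    have hnum : (ε i : ℝ) * ((ε (i + 1) : ℝ) * ((d (z i) * A (z i) (z (i + 1)) : ℤ) : ℝ)) =
        -((d (z i) * |A (z i) (z (i + 1))| : ℤ) : ℝ) := by exact_mod_cast hnumZ
    have habs : d (z i) * |A (z i) (z (i + 1))| = d (z (i + 1)) * |A (z (i + 1)) (z i)| := by
      calc d (z i) * |A (z i) (z (i + 1))| = |d (z i) * A (z i) (z (i + 1))| := by
            rw [abs_mul, abs_of_pos (hdpos _)]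
        _ = |d (z (i + 1)) * A (z (i + 1)) (z i)| := by rw [hsym (z i) (z (i + 1))]
        _ = d (z (i + 1)) * |A (z (i + 1)) (z i)| := by rw [abs_mul, abs_of_pos (hdpos _)]
    have h1 : 1 ≤ |A (z i) (z (i + 1))| := Int.one_le_abs (hAne i)
    have h1' : 1 ≤ |A (z (i + 1)) (z i)| := Int.one_le_abs (hA'ne i)
    have hwsq : d (z i) * d (z (i + 1)) ≤
        (d (z i) * |A (z i) (z (i + 1))|) * (d (z i) * |A (z i) (z (i + 1))|) := by
      nth_rewrite 2 [habs]
      exact mul_le_mul (le_mul_of_one_le_right (le_of_lt (hdpos _)) h1)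
        (le_mul_of_one_le_right (le_of_lt (hdpos _)) h1') (le_of_lt (hdpos _))
        (mul_nonneg (le_of_lt (hdpos _)) (abs_nonneg _))
    have hwpos : (0 : ℝ) ≤ ((d (z i) * |A (z i) (z (i + 1))| : ℤ) : ℝ) := by
      exact_mod_cast mul_nonneg (le_of_lt (hdpos _)) (abs_nonneg _)
    have hwR : Real.sqrt (d (z i)) * Real.sqrt (d (z (i + 1))) ≤
        ((d (z i) * |A (z i) (z (i + 1))| : ℤ) : ℝ) := by
      rw [← Real.sqrt_mul (le_of_lt (hdposR i)),
        show ((d (z i) * |A (z i) (z (i + 1))| : ℤ) : ℝ) =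
          Real.sqrt (((d (z i) * |A (z i) (z (i + 1))| : ℤ) : ℝ) *
            ((d (z i) * |A (z i) (z (i + 1))| : ℤ) : ℝ)) from (Real.sqrt_mul_self hwpos).symm]
      apply Real.sqrt_le_sqrt
      exact_mod_cast hwsq
    have e2 : t i * (t (i + 1) * M (z i) (z (i + 1))) =
        -(((d (z i) * |A (z i) (z (i + 1))| : ℤ) : ℝ) /
          (Real.sqrt (d (z i)) * Real.sqrt (d (z (i + 1))))) := by
      show ((ε i : ℝ) / Real.sqrt (d (z i))) *
        (((ε (i + 1) : ℝ) / Real.sqrt (d (z (i + 1)))) * M (z i) (z (i + 1))) = _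
      rw [hMapp]
      rw [show ((ε i : ℝ) / Real.sqrt (d (z i))) *
          (((ε (i + 1) : ℝ) / Real.sqrt (d (z (i + 1)))) *
            ((d (z i) * A (z i) (z (i + 1)) : ℤ) : ℝ)) =
          ((ε i : ℝ) * ((ε (i + 1) : ℝ) * ((d (z i) * A (z i) (z (i + 1)) : ℤ) : ℝ))) /
            (Real.sqrt (d (z i)) * Real.sqrt (d (z (i + 1)))) from by ring, hnum, neg_div]
    rw [e1, e2]
    have hden : (0 : ℝ) < Real.sqrt (d (z i)) * Real.sqrt (d (z (i + 1))) :=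
      mul_pos (hsqrtpos i) (hsqrtpos (i + 1))
    have := (one_le_div hden).mpr hwR
    linarith
  have hqle : x ⬝ᵥ M *ᵥ x ≤ 0 := by
    rw [hfinal]
    exact Finset.sum_nonpos (fun i _ => hterm i)
  linarith
end

section
/- Let A be a positive quasi-Cartan matrix. Then A_ik · A_kj · A_ji ≥ 0 for any pairwise distinct indices i, j, k. -/
open Matrix

lemma quad_expand {n : ℕ} (M : Matrix (Fin n) (Fin n) ℝ) (i j k : Fin n)
    (a b c : ℝ) :
    (Pi.single i a + Pi.single j b + Pi.single k c) ⬝ᵥ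
      (M *ᵥ (Pi.single i a + Pi.single j b + Pi.single k c)) =
    a*a*M i i + b*b*M j j + c*c*M k k + a*b*M i j + a*b*M j i + a*c*M i k + a*c*M k i
      + b*c*M j k + b*c*M k j := by
  simp only [Matrix.mulVec_add, dotProduct_add, add_dotProduct, Matrix.mulVec_single,
    single_dotProduct, Pi.smul_apply, op_smul_eq_mul, Matrix.col_apply]
  ring

lemma sub3_posdef {n : ℕ} (M : Matrix (Fin n) (Fin n) ℝ) (hM : M.PosDef)
    (i j k : Fin n) (hij : i ≠ j) (hjk : j ≠ k) (hik : i ≠ k)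
    (hsymm : M i j = M j i ∧ M i k = M k i ∧ M j k = M k j) :
    (!![M i i, M i j, M i k; M i j, M j j, M j k; M i k, M j k, M k k]).PosDef := by
  apply Matrix.PosDef.of_dotProduct_mulVec_pos
  · ext p q
    fin_cases p <;> fin_cases q <;>
      simp [Matrix.conjTranspose_apply, hsymm.1, hsymm.2.1, hsymm.2.2]
  · intro v hv
    set w : Fin n → ℝ := Pi.single i (v 0) + Pi.single j (v 1) + Pi.single k (v 2) with hw
    have hwne : w ≠ 0 := by
      obtain ⟨l, hl⟩ := Function.ne_iff.mp hv
      intro h0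
      apply hl
      fin_cases l
      · have := congrFun h0 i
        simpa [hw, Pi.single_eq_of_ne hij, Pi.single_eq_of_ne hik] using this
      · have := congrFun h0 j
        simpa [hw, Pi.single_eq_of_ne hij.symm, Pi.single_eq_of_ne hjk] using this
      · have := congrFun h0 k
        simpa [hw, Pi.single_eq_of_ne hik.symm, Pi.single_eq_of_ne hjk.symm] using this
    have hQ := hM.dotProduct_mulVec_pos hwne
    rw [show star w = w by simp [hw]] at hQ
    rw [hw, quad_expand] at hQ
    rw [show star v = v by simp]
    have : v ⬝ᵥ (!![M i i, M i j, M i k; M i j, M j j, M j k; M i k, M j k, M k k] *ᵥ v) =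
        v 0 * v 0 * M i i + v 1 * v 1 * M j j + v 2 * v 2 * M k k + v 0 * v 1 * M i j +
        v 0 * v 1 * M j i + v 0 * v 2 * M i k + v 0 * v 2 * M k i + v 1 * v 2 * M j k +
        v 1 * v 2 * M k j := by
      simp [dotProduct, Matrix.mulVec, Fin.sum_univ_three, hsymm.1, hsymm.2.1, hsymm.2.2]
      ring
    rw [this]
    exact hQ

/-- For a positive quasi-Cartan matrix `A`, `A i k * A k j * A j i ≥ 0`
for any pairwise distinct `i, j, k`. -/
theorem statement6 {n : ℕ} (A : Matrix (Fin n) (Fin n) ℤ) (hA : IsPositiveQuasiCartan A) :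
    ∀ i j k, i ≠ j → j ≠ k → i ≠ k → 0 ≤ A i k * A k j * A j i := by
  obtain ⟨hdiag, d, hd, hsym, hpos⟩ := hA
  intro i j k hij hjk hik
  by_contra hcon
  push_neg at hcon
  have hcon' : A i k * A k j * A j i ≤ -1 := by omega
  have hik0 : A i k ≠ 0 := fun h => by simp [h] at hcon
  have hkj0 : A k j ≠ 0 := fun h => by simp [h] at hcon
  have hji0 : A j i ≠ 0 := fun h => by simp [h] at hcon
  have hflip : ∀ p q : Fin n, A p q ≠ 0 → A q p ≠ 0 := by
    intro p q hp h
    have h2 := hsym q p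
    rw [h, mul_zero] at h2
    exact hp ((mul_eq_zero.mp h2.symm).resolve_left (hd p).ne')
  have key : ∀ p q : Fin n, A p q ≠ 0 → 1 ≤ A p q * A q p := by
    intro p q hp
    have h1 : 0 ≤ d p * d q * (A p q * A q p) := by
      have h : d p * d q * (A p q * A q p) = (d p * A p q) * (d q * A q p) := by ring
      rw [h, ← hsym p q]; exact mul_self_nonneg _
    have h2 : 0 ≤ A p q * A q p :=
      (mul_nonneg_iff_of_pos_left (mul_pos (hd p) (hd q))).mp h1
    rcases (lt_or_eq_of_le h2).symm with h | h
    · exact absurd h.symm (mul_ne_zero hp (hflip p q hp))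
    · omega
  set M : Matrix (Fin n) (Fin n) ℝ := Matrix.of fun i j => ((d i * A i j : ℤ) : ℝ) with hM
  have hMapp : ∀ p q, M p q = ((d p * A p q : ℤ) : ℝ) := fun p q => rfl
  have hMsym : ∀ p q, M p q = M q p := by
    intro p q; rw [hMapp, hMapp]; exact_mod_cast hsym p q
  have hN := sub3_posdef M hpos i j k hij hjk hik ⟨hMsym i j, hMsym i k, hMsym j k⟩
  have hdet := hN.det_pos
  rw [Matrix.det_fin_three] at hdet
  -- now hdet is a polynomial inequality in M entries
  set a : ℝ := ((d i : ℤ) : ℝ) with ha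
  set b : ℝ := ((d j : ℤ) : ℝ) with hb
  set c : ℝ := ((d k : ℤ) : ℝ) with hc
  set x : ℝ := M i k with hx
  set y : ℝ := M j k with hy
  set z : ℝ := M i j with hz
  have hapos : 0 < a := by rw [ha]; exact_mod_cast hd i
  have hbpos : 0 < b := by rw [hb]; exact_mod_cast hd j
  have hcpos : 0 < c := by rw [hc]; exact_mod_cast hd k
  have hMii : M i i = 2 * a := by rw [hMapp, hdiag i, ha]; push_cast; ring
  have hMjj : M j j = 2 * b := by rw [hMapp, hdiag j, hb]; push_cast; ring
  have hMkk : M k k = 2 * c := by rw [hMapp, hdiag k, hc]; push_cast; ring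
  -- x^2 ≥ a*c etc
  have hx2 : a * c ≤ x ^ 2 := by
    have h1 : d i * d k ≤ d i * d k * (A i k * A k i) := by
      have := key i k hik0
      nlinarith [mul_pos (hd i) (hd k)]
    have h2 : x ^ 2 = ((d i * d k * (A i k * A k i) : ℤ) : ℝ) := by
      rw [hx, hMapp]
      have : (d i * d k * (A i k * A k i) : ℤ) = (d i * A i k) * (d k * A k i) := by ring
      rw [this, ← hsym i k]; push_cast; ring
    rw [h2, ha, hc]
    exact_mod_cast h1
  have hy2 : b * c ≤ y ^ 2 := by
    have h1 : d j * d k ≤ d j * d k * (A j k * A k j) := by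
      have := key k j hkj0
      nlinarith [mul_pos (hd j) (hd k), key j k (hflip k j hkj0)]
    have h2 : y ^ 2 = ((d j * d k * (A j k * A k j) : ℤ) : ℝ) := by
      rw [hy, hMapp]
      have : (d j * d k * (A j k * A k j) : ℤ) = (d j * A j k) * (d k * A k j) := by ring
      rw [this, ← hsym j k]; push_cast; ring
    rw [hb, hc]
    rw [h2]
    exact_mod_cast h1
  have hz2 : a * b ≤ z ^ 2 := by
    have h1 : d i * d j ≤ d i * d j * (A i j * A j i) := by
      have := key j i hji0
      nlinarith [mul_pos (hd i) (hd j), key i j (hflip j i hji0)]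
    have h2 : z ^ 2 = ((d i * d j * (A i j * A j i) : ℤ) : ℝ) := by
      rw [hz, hMapp]
      have : (d i * d j * (A i j * A j i) : ℤ) = (d i * A i j) * (d j * A j i) := by ring
      rw [this, ← hsym i j]; push_cast; ring
    rw [ha, hb]
    rw [h2]
    exact_mod_cast h1
  -- xyz ≤ -abc
  have hxyz : x * y * z ≤ -(a * b * c) := by
    have h1 : d i * d j * d k * (A i k * A k j * A j i) ≤ -(d i * d j * d k) := by
      nlinarith [mul_pos (mul_pos (hd i) (hd j)) (hd k)]
    have h2 : x * y * z = ((d i * d j * d k * (A i k * A k j * A j i) : ℤ) : ℝ) := by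
      rw [hx, hy, hz, hMapp, hMapp, hMapp]
      have e1 : (d j * A j k : ℤ) = d k * A k j := hsym j k
      have e2 : (d i * A i j : ℤ) = d j * A j i := hsym i j
      push_cast [e1, e2]
      ring
    rw [h2, ha, hb, hc]
    exact_mod_cast h1
  rw [hMii, hMjj, hMkk] at hdet
  simp only [Matrix.of_apply, Matrix.cons_val', Matrix.cons_val_zero, Matrix.cons_val_one,
    Matrix.head_cons, Matrix.empty_val', Matrix.cons_val_fin_one, Matrix.head_fin_const,
    Matrix.cons_val_two, Matrix.tail_cons] at hdet
  nlinarith [hdet, hx2, hy2, hz2, hxyz, hapos, hbpos, hcpos,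
    mul_le_mul_of_nonneg_left hx2 hbpos.le, mul_le_mul_of_nonneg_left hy2 hapos.le,
    mul_le_mul_of_nonneg_left hz2 hcpos.le]
end

section
/- Let A be an n×n quasi-Cartan matrix whose underlying graph — the graph on vertices {1,…,n} with an edge {i,j} whenever i ≠ j and A_ij ≠ 0 — is acyclic (a forest). Then there exists a diagonal matrix E with diagonal entries ±1 such that all off-diagonal entries of EAE are ≤ 0. Consequently, A is positive if and only if the generalized Cartan matrix A⁰, defined by A⁰_ii = 2 and A⁰_ij = −|A_ij| for i ≠ j, is positive. -/
open Matrix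

private lemma sign_aux {n : ℕ} :
    ∀ (m : ℕ) (A : Matrix (Fin n) (Fin n) ℤ) (d : Fin n → ℤ),
      (∀ i, 0 < d i) → (∀ i j, d i * A i j = d j * A j i) →
      (SimpleGraph.fromRel (fun i j : Fin n => A i j ≠ 0)).IsAcyclic →
      (Finset.univ.filter (fun p : Fin n × Fin n => p.1 ≠ p.2 ∧ A p.1 p.2 ≠ 0)).card ≤ m →
      ∃ ε : Fin n → ℤ, (∀ i, ε i = 1 ∨ ε i = -1) ∧ ∀ i j, i ≠ j → ε i * A i j * ε j ≤ 0 := by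
  intro m
  induction m with
  | zero =>
      intro A d hd hsym hac hcard
      refine ⟨fun _ => 1, fun _ => Or.inl rfl, fun i j hij => ?_⟩
      have hz : A i j = 0 := by
        by_contra h
        have : (⟨i, j⟩ : Fin n × Fin n) ∈
            Finset.univ.filter (fun p : Fin n × Fin n => p.1 ≠ p.2 ∧ A p.1 p.2 ≠ 0) := by
          simp [hij, h]
        have := Finset.card_pos.mpr ⟨_, this⟩
        omega
      simp [hz]
  | succ m ih =>
      intro A d hd hsym hac hcard
      classical
      set S := Finset.univ.filter (fun p : Fin n × Fin n => p.1 ≠ p.2 ∧ A p.1 p.2 ≠ 0) with hS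
      by_cases hne : S.Nonempty
      swap
      · refine ⟨fun _ => 1, fun _ => Or.inl rfl, fun i j hij => ?_⟩
        have hz : A i j = 0 := by
          by_contra h
          exact hne ⟨⟨i, j⟩, by simp [hS, hij, h]⟩
        simp [hz]
      obtain ⟨⟨a, b⟩, hmem⟩ := hne
      rw [hS, Finset.mem_filter] at hmem
      obtain ⟨-, hab, hAab⟩ := hmem
      set A' : Matrix (Fin n) (Fin n) ℤ :=
        Matrix.of (fun i j => if (i = a ∧ j = b) ∨ (i = b ∧ j = a) then 0 else A i j) with hA'
      have hA'cases : ∀ i j, A' i j = 0 ∨ A' i j = A i j := by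
        intro i j
        by_cases h : (i = a ∧ j = b) ∨ (i = b ∧ j = a) <;> simp [hA', h]
      have hA'ne : ∀ i j, A' i j ≠ 0 → A i j ≠ 0 := by
        intro i j h
        rcases hA'cases i j with h0 | he
        · exact absurd h0 h
        · rwa [he] at h
      have hcond : ∀ i j : Fin n, ((i = a ∧ j = b) ∨ (i = b ∧ j = a)) ↔
          ((j = a ∧ i = b) ∨ (j = b ∧ i = a)) := by tauto
      have hsym' : ∀ i j, d i * A' i j = d j * A' j i := by
        intro i j
        by_cases h : (i = a ∧ j = b) ∨ (i = b ∧ j = a)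
        · simp [hA', h, (hcond i j).mp h]
        · simp only [hA', Matrix.of_apply, if_neg h, if_neg (fun hh => h ((hcond i j).mpr hh))]
          exact hsym i j
      set G := SimpleGraph.fromRel (fun i j : Fin n => A i j ≠ 0) with hG
      set G' := SimpleGraph.fromRel (fun i j : Fin n => A' i j ≠ 0) with hG'
      have hle : G' ≤ G := by
        intro i j h
        rw [hG', SimpleGraph.fromRel_adj] at h
        rw [hG, SimpleGraph.fromRel_adj]
        exact ⟨h.1, h.2.imp (hA'ne i j) (hA'ne j i)⟩
      have hac' : G'.IsAcyclic := fun v c hc => hac (c.mapLe hle) (hc.mapLe hle)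
      have hcard' : (Finset.univ.filter
          (fun p : Fin n × Fin n => p.1 ≠ p.2 ∧ A' p.1 p.2 ≠ 0)).card ≤ m := by
        have hsub : (Finset.univ.filter
            (fun p : Fin n × Fin n => p.1 ≠ p.2 ∧ A' p.1 p.2 ≠ 0)) ⊆ S.erase ⟨a, b⟩ := by
          intro ⟨i, j⟩ hijm
          rw [Finset.mem_filter] at hijm
          obtain ⟨-, hij, hij0⟩ := hijm
          have hnc : ¬ ((i = a ∧ j = b) ∨ (i = b ∧ j = a)) := by
            intro h; rw [hA'] at hij0; simp [h] at hij0
          refine Finset.mem_erase.mpr ⟨?_, ?_⟩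
          · intro h
            exact hnc (Or.inl ⟨congrArg Prod.fst h, congrArg Prod.snd h⟩)
          · rw [hS, Finset.mem_filter]
            exact ⟨Finset.mem_univ _, hij, hA'ne i j hij0⟩
        have h1 := Finset.card_le_card hsub
        have h2 : (S.erase (⟨a, b⟩ : Fin n × Fin n)).card = S.card - 1 :=
          Finset.card_erase_of_mem (by rw [hS, Finset.mem_filter]; exact ⟨Finset.mem_univ _, hab, hAab⟩)
        omega
      obtain ⟨ε', hε'sg, hε'⟩ := ih A' d hd hsym' hac' hcard'
      have hε'sq : ∀ i, ε' i * ε' i = 1 := by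
        intro i; rcases hε'sg i with h | h <;> simp [h]
      have hε'ne : ∀ i, ε' i ≠ 0 := by
        intro i; rcases hε'sg i with h | h <;> simp [h]
      -- the sign flip
      set t : ℤ := ε' a * A a b * ε' b with ht
      have htne : t ≠ 0 := mul_ne_zero (mul_ne_zero (hε'ne a) hAab) (hε'ne b)
      obtain ⟨s, hssg, hst⟩ : ∃ s : ℤ, (s = 1 ∨ s = -1) ∧ s * t ≤ 0 := by
        rcases lt_trichotomy t 0 with h | h | h
        · exact ⟨1, Or.inl rfl, by linarith⟩
        · exact absurd h htne
        · exact ⟨-1, Or.inr rfl, by linarith⟩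
      have hssq : s * s = 1 := by rcases hssg with h | h <;> simp [h]
      -- bridge: a not reachable from b in G'
      have hGadj : G.Adj a b := by
        rw [hG, SimpleGraph.fromRel_adj]; exact ⟨hab, Or.inl hAab⟩
      have hbridge : ¬ (G \ SimpleGraph.fromEdgeSet {s(a, b)}).Reachable a b := by
        have := (SimpleGraph.isAcyclic_iff_forall_adj_isBridge.mp hac) hGadj
        exact SimpleGraph.isBridge_iff.mp this
      have hle2 : G' ≤ G \ SimpleGraph.fromEdgeSet {s(a, b)} := by
        intro i j h
        have hij := h
        rw [hG', SimpleGraph.fromRel_adj] at hij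
        obtain ⟨hne', hor⟩ := hij
        have hnc : ¬ ((i = a ∧ j = b) ∨ (i = b ∧ j = a)) := by
          intro hcnd
          rcases hor with h0 | h0
          · rw [hA'] at h0; simp [hcnd] at h0
          · rw [hA'] at h0; simp [(hcond i j).mp hcnd] at h0
        refine ⟨hle h, ?_⟩
        simp only [SimpleGraph.fromEdgeSet_adj, Set.mem_singleton_iff]
        rintro ⟨heq, -⟩
        rw [Sym2.eq_iff] at heq
        exact hnc heq
      have hnr : ¬ G'.Reachable b a := fun h => hbridge ((h.mono hle2).symm)
      refine ⟨fun i => if G'.Reachable b i then s * ε' i else ε' i, ?_, ?_⟩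
      · intro i
        by_cases h : G'.Reachable b i <;> simp only [if_pos, if_neg, h, if_true, if_false]
        · rcases hssg with h1 | h1 <;> rcases hε'sg i with h2 | h2 <;> simp [h1, h2]
        · exact hε'sg i
      · intro i j hij
        beta_reduce
        by_cases hz : A i j = 0
        · simp [hz]
        by_cases hcnd : (i = a ∧ j = b) ∨ (i = b ∧ j = a)
        · rcases hcnd with ⟨rfl, rfl⟩ | ⟨rfl, rfl⟩
          · rw [if_neg hnr, if_pos (SimpleGraph.Reachable.refl j)]
            calc ε' i * A i j * (s * ε' j) = s * t := by rw [ht]; ring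
            _ ≤ 0 := hst
          · rw [if_pos (SimpleGraph.Reachable.refl i), if_neg hnr]
            have key : d i * (s * ε' i * A i j * ε' j) = d j * (s * t) := by
              rw [ht]; linear_combination (s * ε' i * ε' j) * hsym i j
            nlinarith [hd i, hd j, hst, key]
        · have hA'eq : A' i j = A i j := by rw [hA']; simp [hcnd]
          have hadj : G'.Adj i j := by
            rw [hG', SimpleGraph.fromRel_adj]
            exact ⟨hij, Or.inl (by rw [hA'eq]; exact hz)⟩
          have hreq : G'.Reachable b i ↔ G'.Reachable b j :=
            ⟨fun h => h.trans hadj.reachable, fun h => h.trans hadj.symm.reachable⟩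
          have hbase : ε' i * A i j * ε' j ≤ 0 := by
            have := hε' i j hij; rwa [hA'eq] at this
          by_cases hbi : G'.Reachable b i
          · rw [if_pos hbi, if_pos (hreq.mp hbi)]
            calc s * ε' i * A i j * (s * ε' j) = (s * s) * (ε' i * A i j * ε' j) := by ring
            _ = ε' i * A i j * ε' j := by rw [hssq]; ring
            _ ≤ 0 := hbase
          · rw [if_neg hbi, if_neg (fun h => hbi (hreq.mpr h))]
            exact hbase

private lemma conj_posdef {n : ℕ} (M : Matrix (Fin n) (Fin n) ℝ) (ε : Fin n → ℝ)
    (hε : ∀ i, ε i * ε i = 1) (hM : M.PosDef) :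
    (Matrix.of fun i j => ε i * M i j * ε j).PosDef := by
  have hsymM : ∀ i j, M j i = M i j := fun i j => by
    conv_lhs => rw [← hM.1]
    simp [Matrix.conjTranspose_apply]
  rw [Matrix.posDef_iff_dotProduct_mulVec]
  constructor
  · ext i j
    simp only [Matrix.conjTranspose_apply, Matrix.of_apply, star_trivial]
    rw [hsymM j i]; ring
  · intro x hx
    set y : Fin n → ℝ := fun i => ε i * x i with hy
    have hyne : y ≠ 0 := by
      intro h
      apply hx
      funext i
      have : y i = 0 := by rw [h]; rfl
      have h2 : x i = ε i * y i := by rw [hy]; simp only []; rw [← mul_assoc, hε i, one_mul]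
      rw [h2, this, mul_zero]
      rfl
    have hpos := hM.dotProduct_mulVec_pos hyne
    have heq : dotProduct (star x) ((Matrix.of fun i j => ε i * M i j * ε j) *ᵥ x)
        = dotProduct (star y) (M *ᵥ y) := by
      simp only [dotProduct, Matrix.mulVec, star_trivial, Pi.star_apply, hy,
        Finset.mul_sum, Matrix.of_apply]
      rw [Finset.sum_comm]
      conv_rhs => rw [Finset.sum_comm]
      refine Finset.sum_congr rfl fun j _ => Finset.sum_congr rfl fun i _ => by ring
    rw [heq]
    exact hpos

private lemma transfer_pos {n : ℕ} (A B : Matrix (Fin n) (Fin n) ℤ) (ε : Fin n → ℤ)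
    (hsg : ∀ i, ε i = 1 ∨ ε i = -1) (hAB : ∀ i j, ε i * A i j * ε j = B i j)
    (hA : IsPositiveQuasiCartan A) : IsPositiveQuasiCartan B := by
  have hsq : ∀ i, ε i * ε i = 1 := fun i => by rcases hsg i with h | h <;> simp [h]
  obtain ⟨hdiag, d, hd, hsym, hpd⟩ := hA
  refine ⟨fun i => ?_, d, hd, fun i j => ?_, ?_⟩
  · rw [← hAB i i, hdiag i]
    have := hsq i; nlinarith [hsq i]
  · rw [← hAB i j, ← hAB j i]
    linear_combination (ε i * ε j) * hsym i j
  · have hmeq : (Matrix.of fun i j => ((d i * B i j : ℤ) : ℝ))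
        = Matrix.of fun i j => (ε i : ℝ) * ((d i * A i j : ℤ) : ℝ) * (ε j : ℝ) := by
      ext i j
      have hz : d i * B i j = ε i * (d i * A i j) * ε j := by
        linear_combination d i * (hAB i j).symm
      simp only [Matrix.of_apply]
      rw [hz]; push_cast; ring
    rw [hmeq]
    exact conj_posdef _ (fun i => (ε i : ℝ)) (fun i => by have := hsq i; beta_reduce; exact_mod_cast this) hpd

/-- If the underlying graph of a quasi-Cartan matrix `A` (edge `{i,j}` iff
`i ≠ j` and `A i j ≠ 0`) is a forest, then there is a diagonal sign matrix `E` with `EAE`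
having all off-diagonal entries `≤ 0`; consequently `A` is positive iff the generalized
Cartan matrix `A⁰` with `A⁰ i j = -|A i j|` off the diagonal is positive. -/
theorem statement7 {n : ℕ} (A : Matrix (Fin n) (Fin n) ℤ) (hA : IsQuasiCartan A)
    (hforest : (SimpleGraph.fromRel (fun i j : Fin n => A i j ≠ 0)).IsAcyclic) :
    (∃ ε : Fin n → ℤ, (∀ i, ε i = 1 ∨ ε i = -1) ∧
      ∀ i j, i ≠ j → ε i * A i j * ε j ≤ 0) ∧
    (IsPositiveQuasiCartan A ↔
      IsPositiveQuasiCartan (Matrix.of fun i j => if i = j then 2 else -|A i j|)) := by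
  obtain ⟨hdiag, d, hd, hsym⟩ := hA
  obtain ⟨ε, hsg, hle⟩ := sign_aux
    (Finset.univ.filter (fun p : Fin n × Fin n => p.1 ≠ p.2 ∧ A p.1 p.2 ≠ 0)).card
    A d hd hsym hforest le_rfl
  refine ⟨⟨ε, hsg, hle⟩, ?_⟩
  have hsq : ∀ i, ε i * ε i = 1 := fun i => by rcases hsg i with h | h <;> simp [h]
  have hE : ∀ i j, ε i * A i j * ε j =
      (Matrix.of fun i j => if i = j then 2 else -|A i j|) i j := by
    intro i j
    by_cases h : i = j
    · subst h
      simp only [Matrix.of_apply, hdiag i, eq_self_iff_true, if_true]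
      linear_combination 2 * hsq i
    · simp only [Matrix.of_apply, if_neg h]
      have h1 := hle i j h
      have h2 : |ε i * A i j * ε j| = |A i j| := by
        rcases hsg i with hi | hi <;> rcases hsg j with hj | hj <;>
          simp [hi, hj, abs_neg]
      rw [abs_of_nonpos h1] at h2
      linarith
  have hE' : ∀ i j, ε i * (Matrix.of fun i j => if i = j then 2 else -|A i j|) i j * ε j
      = A i j := by
    intro i j
    rw [← hE i j]
    linear_combination (ε i * ε i * A i j) * hsq j + (A i j) * hsq i
  exact ⟨transfer_pos A _ ε hsg hE, transfer_pos _ A ε hsg hE'⟩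
end

section
/- Let A be an n×n quasi-Cartan matrix (n ≥ 1). For each i, let s_i be the ℤ-linear automorphism of ℤⁿ determined by s_i(e_j) = e_j − A_ij·e_i, where e_1,…,e_n is the standard basis (each s_i is an involution, hence invertible). Let W(A) be the subgroup of GL_n(ℤ) generated by s_1,…,s_n. Then A is positive if and only if W(A) is finite. -/
open Matrix

lemma st10_conj_entry {n : ℕ} (A : Matrix (Fin n) (Fin n) ℤ) (i : Fin n)
    (X : Matrix (Fin n) (Fin n) ℝ)
    (σ : Matrix (Fin n) (Fin n) ℝ)
    (hσ : ∀ a b, σ a b = (if a = b then (1:ℝ) else 0) - (if a = i then (A i b : ℝ) else 0))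
    (j k : Fin n) :
    (σᵀ * X * σ) j k = X j k - (A i j : ℝ) * X i k - X j i * (A i k : ℝ)
      + (A i j : ℝ) * X i i * (A i k : ℝ) := by
  simp only [Matrix.mul_apply, Matrix.transpose_apply, hσ, sub_mul, mul_sub,
    ite_mul, mul_ite, zero_mul, mul_zero, one_mul, mul_one,
    Finset.sum_sub_distrib, Finset.sum_ite_eq, Finset.sum_ite_eq',
    Finset.mem_univ, if_true]
  ring

lemma st10_gen_inv {n : ℕ} (A : Matrix (Fin n) (Fin n) ℤ) (d : Fin n → ℤ)
    (hAii : ∀ i, A i i = 2) (hsym : ∀ i j, d i * A i j = d j * A j i)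
    (i : Fin n) (σ : Matrix (Fin n) (Fin n) ℝ)
    (hσ : ∀ a b, σ a b = (if a = b then (1:ℝ) else 0) - (if a = i then (A i b : ℝ) else 0)) :
    σᵀ * (Matrix.of fun a b => ((d a * A a b : ℤ) : ℝ)) * σ
      = Matrix.of fun a b => ((d a * A a b : ℤ) : ℝ) := by
  ext j k
  rw [st10_conj_entry A i _ σ hσ j k]
  have h1 : (d i : ℝ) * (A i j : ℝ) = (d j : ℝ) * (A j i : ℝ) := by exact_mod_cast hsym i j
  have h2 : (A i i : ℝ) = 2 := by exact_mod_cast hAii i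
  simp only [Matrix.of_apply]
  push_cast
  linear_combination (A i k : ℝ) * h1 + ((A i j : ℝ) * (d i : ℝ) * (A i k : ℝ)) * h2

/-- Let `A` be an `n×n` quasi-Cartan matrix (`n ≥ 1`) and for each `i` let
`s i` be the unit of the matrix ring whose underlying matrix sends `e j ↦ e j - A i j • e i`
(acting by `mulVec`, so its `(a,b)` entry is `δ a b - δ a i * A i b`).  Then `A` is positive
iff the group `W(A)` generated by the `s i` is finite. -/
theorem statement10 {n : ℕ} (hn : 1 ≤ n) (A : Matrix (Fin n) (Fin n) ℤ)
    (hA : IsQuasiCartan A)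
    (s : Fin n → (Matrix (Fin n) (Fin n) ℤ)ˣ)
    (hs : ∀ i, (s i : Matrix (Fin n) (Fin n) ℤ) =
      Matrix.of fun a b => (if a = b then 1 else 0) - (if a = i then A i b else 0)) :
    IsPositiveQuasiCartan A ↔ Finite (Subgroup.closure (Set.range s)) := by
  classical
  obtain ⟨hAii, d, hd, hsym⟩ := hA
  set φ : Matrix (Fin n) (Fin n) ℤ →+* Matrix (Fin n) (Fin n) ℝ :=
    (Int.castRingHom ℝ).mapMatrix with hφ
  have hφapp : ∀ (M : Matrix (Fin n) (Fin n) ℤ) a b, φ M a b = (M a b : ℝ) := by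
    intro M a b; simp [hφ, RingHom.mapMatrix_apply, Matrix.map_apply]
  have hσ : ∀ i a b, φ (s i : Matrix (Fin n) (Fin n) ℤ) a b
      = (if a = b then (1:ℝ) else 0) - (if a = i then (A i b : ℝ) else 0) := by
    intro i a b
    rw [hφapp, hs i]
    simp only [Matrix.of_apply]
    push_cast [apply_ite (Int.cast : ℤ → ℝ)]
    ring
  have key : ∀ (S : Matrix (Fin n) (Fin n) ℝ),
      (∀ i, (φ ↑(s i))ᵀ * S * (φ ↑(s i)) = S) →
      ∀ w : (Matrix (Fin n) (Fin n) ℤ)ˣ, w ∈ Subgroup.closure (Set.range s) →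
      (φ ↑w)ᵀ * S * (φ ↑w) = S := by
    intro S hgen w hw
    induction hw using Subgroup.closure_induction with
    | mem x hx => obtain ⟨i, rfl⟩ := hx; exact hgen i
    | one => simp
    | mul x y hx hy px py =>
        have hxy : (φ ↑(x * y)) = φ ↑x * φ ↑y := by rw [Units.val_mul, _root_.map_mul]
        calc (φ ↑(x * y))ᵀ * S * (φ ↑(x * y))
            = (φ ↑y)ᵀ * ((φ ↑x)ᵀ * S * (φ ↑x)) * (φ ↑y) := by
              rw [hxy, transpose_mul]; noncomm_ring
          _ = S := by rw [px, py]
    | inv x hx px =>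
        have h1 : φ ↑x * φ ↑x⁻¹ = 1 := by
          rw [← _root_.map_mul, ← Units.val_mul, mul_inv_cancel, Units.val_one, _root_.map_one]
        calc (φ ↑x⁻¹)ᵀ * S * (φ ↑x⁻¹)
            = (φ ↑x⁻¹)ᵀ * ((φ ↑x)ᵀ * S * (φ ↑x)) * (φ ↑x⁻¹) := by rw [px]
          _ = (φ ↑x * φ ↑x⁻¹)ᵀ * S * (φ ↑x * φ ↑x⁻¹) := by rw [transpose_mul]; noncomm_ring
          _ = S := by rw [h1]; simp
  constructor
  · rintro ⟨-, d', hd', hsym', hpos⟩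
    set S : Matrix (Fin n) (Fin n) ℝ := Matrix.of fun a b => ((d' a * A a b : ℤ) : ℝ) with hSdef
    have hgen : ∀ i, (φ ↑(s i))ᵀ * S * (φ ↑(s i)) = S :=
      fun i => st10_gen_inv A d' hAii hsym' i _ (hσ i)
    have hps : S.PosSemidef := hpos.posSemidef
    set B : Matrix (Fin n) (Fin n) ℝ := (open scoped MatrixOrder in CFC.sqrt S) with hBdef
    have hBB : B * B = S := by open scoped MatrixOrder in exact CFC.sqrt_mul_sqrt_self S hps.nonneg
    have hBt : Bᵀ = B := by
      have h := (open scoped MatrixOrder in (CFC.sqrt_nonneg S).posSemidef).1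
      rwa [Matrix.IsHermitian, conjTranspose_eq_transpose_of_trivial] at h
    have hdetS : 0 < S.det := hpos.det_pos
    have hdetB : B.det ≠ 0 := by
      intro h
      rw [← hBB, det_mul, h, mul_zero] at hdetS
      exact lt_irrefl _ hdetS
    have hBinv : B * B⁻¹ = 1 := mul_nonsing_inv B (isUnit_iff_ne_zero.mpr hdetB)
    have hBinv' : B⁻¹ * B = 1 := nonsing_inv_mul B (isUnit_iff_ne_zero.mpr hdetB)
    set C1 : ℝ := ∑ a, ∑ k, |B⁻¹ a k| with hC1
    set C2 : ℝ := ∑ l, ∑ b, |B l b| with hC2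
    have hC2nn : 0 ≤ C2 := Finset.sum_nonneg fun _ _ => Finset.sum_nonneg fun _ _ => abs_nonneg _
    have hC : ∀ w : (Matrix (Fin n) (Fin n) ℤ)ˣ, w ∈ Subgroup.closure (Set.range s) →
        ∀ a b, |((w : Matrix (Fin n) (Fin n) ℤ) a b : ℝ)| ≤ C1 * C2 := by
      intro w hw a b
      have horth := key S hgen w hw
      set M : Matrix (Fin n) (Fin n) ℝ := B * φ ↑w * B⁻¹ with hM
      have hMt : Mᵀ * M = 1 := by
        calc Mᵀ * M
            = (B⁻¹)ᵀ * ((φ ↑w)ᵀ * (Bᵀ * B) * φ ↑w) * B⁻¹ := by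
              rw [hM, transpose_mul, transpose_mul]; noncomm_ring
          _ = (B⁻¹)ᵀ * ((φ ↑w)ᵀ * S * φ ↑w) * B⁻¹ := by rw [hBt, hBB]
          _ = (B⁻¹)ᵀ * (Bᵀ * B) * B⁻¹ := by rw [horth, hBt, hBB]
          _ = (B * B⁻¹)ᵀ * (B * B⁻¹) := by rw [transpose_mul, hBt]; noncomm_ring
          _ = 1 := by rw [hBinv]; simp
      have hMentry : ∀ k l, |M k l| ≤ 1 := by
        intro k l
        have h1 : ∑ a, M a l * M a l = 1 := by
          have h := congrFun (congrFun hMt l) l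
          simpa [Matrix.mul_apply, Matrix.one_apply] using h
        have h2 : M k l * M k l ≤ 1 := by
          rw [← h1]
          exact Finset.single_le_sum (fun a _ => mul_self_nonneg (M a l)) (Finset.mem_univ k)
        nlinarith [abs_nonneg (M k l), abs_mul_abs_self (M k l)]
      have hw' : φ ↑w = B⁻¹ * M * B := by
        calc φ ↑w = (B⁻¹ * B) * φ ↑w * (B⁻¹ * B) := by rw [hBinv']; simp
          _ = B⁻¹ * M * B := by rw [hM]; noncomm_ring
      have hent : ((w : Matrix (Fin n) (Fin n) ℤ) a b : ℝ) = ∑ k, B⁻¹ a k * (M * B) k b := by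
        rw [← hφapp, hw', mul_assoc, Matrix.mul_apply]
      have hMB : ∀ k, |(M * B) k b| ≤ C2 := by
        intro k
        calc |(M * B) k b| ≤ ∑ l, |M k l * B l b| := by
              rw [Matrix.mul_apply]; exact Finset.abs_sum_le_sum_abs _ _
          _ ≤ ∑ l, |B l b| := by
              refine Finset.sum_le_sum fun l _ => ?_
              rw [abs_mul]
              calc |M k l| * |B l b| ≤ 1 * |B l b| :=
                    mul_le_mul_of_nonneg_right (hMentry k l) (abs_nonneg _)
                _ = |B l b| := one_mul _
          _ ≤ C2 := Finset.sum_le_sum fun l _ =>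
              Finset.single_le_sum (f := fun b' => |B l b'|) (fun _ _ => abs_nonneg _)
                (Finset.mem_univ b)
      calc |((w : Matrix (Fin n) (Fin n) ℤ) a b : ℝ)|
          ≤ ∑ k, |B⁻¹ a k| * |(M * B) k b| := by
            rw [hent]
            exact (Finset.abs_sum_le_sum_abs _ _).trans (le_of_eq (by simp [abs_mul]))
        _ ≤ ∑ k, |B⁻¹ a k| * C2 :=
            Finset.sum_le_sum fun k _ => mul_le_mul_of_nonneg_left (hMB k) (abs_nonneg _)
        _ = (∑ k, |B⁻¹ a k|) * C2 := by rw [Finset.sum_mul]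
        _ ≤ C1 * C2 := by
            refine mul_le_mul_of_nonneg_right ?_ hC2nn
            exact Finset.single_le_sum (f := fun a' => ∑ k, |B⁻¹ a' k|)
              (fun _ _ => Finset.sum_nonneg fun _ _ => abs_nonneg _) (Finset.mem_univ a)
    set N : ℤ := ⌈C1 * C2⌉ with hN
    have hNb : ∀ w : ↥(Subgroup.closure (Set.range s)), ∀ a b,
        ((w : (Matrix (Fin n) (Fin n) ℤ)ˣ) : Matrix (Fin n) (Fin n) ℤ) a b ∈ Finset.Icc (-N) N := by
      intro w a b
      have h := hC w.1 w.2 a b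
      set x : ℤ := ((w : (Matrix (Fin n) (Fin n) ℤ)ˣ) : Matrix (Fin n) (Fin n) ℤ) a b with hx
      rw [Finset.mem_Icc]
      have h1 : (x : ℝ) ≤ (N : ℝ) :=
        le_trans (le_abs_self _) (le_trans h (Int.le_ceil _))
      have h2 : ((-x : ℤ) : ℝ) ≤ (N : ℝ) := by
        push_cast
        exact le_trans (neg_le_abs _) (le_trans h (Int.le_ceil _))
      constructor
      · have := (by exact_mod_cast h2 : -x ≤ N); omega
      · exact_mod_cast h1
    let f : ↥(Subgroup.closure (Set.range s)) → (Fin n → Fin n → ↥(Finset.Icc (-N) N)) :=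
      fun w a b => ⟨_, hNb w a b⟩
    have hf : Function.Injective f := by
      intro w w' h
      refine Subtype.ext (Units.ext ?_)
      ext a b
      exact congrArg Subtype.val (congrFun (congrFun h a) b)
    exact Finite.of_injective f hf
  · intro hfin
    refine ⟨hAii, d, hd, hsym, ?_⟩
    set W := Subgroup.closure (Set.range s) with hW
    haveI : Fintype ↥W := Fintype.ofFinite ↥W
    set F : ↥W → Matrix (Fin n) (Fin n) ℝ :=
      fun g => φ ((g : (Matrix (Fin n) (Fin n) ℤ)ˣ) : Matrix (Fin n) (Fin n) ℤ) with hF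
    set P : Matrix (Fin n) (Fin n) ℝ := ∑ g : ↥W, (F g)ᵀ * F g with hPdef
    have hPt : Pᵀ = P := by
      rw [hPdef, Matrix.transpose_sum]
      exact Finset.sum_congr rfl fun g _ => by rw [transpose_mul, transpose_transpose]
    have hF1 : F (1 : ↥W) = 1 := by
      rw [hF]; simp
    have hsumVec : ∀ x : Fin n → ℝ, P *ᵥ x = ∑ g : ↥W, ((F g)ᵀ * F g) *ᵥ x := by
      intro x; ext a
      rw [hPdef]
      simp only [Matrix.mulVec, dotProduct, Matrix.sum_apply, Finset.sum_apply, Finset.sum_mul]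
      exact Finset.sum_comm
    have hdotsum : ∀ (x : Fin n → ℝ) (v : ↥W → Fin n → ℝ),
        x ⬝ᵥ (∑ g : ↥W, v g) = ∑ g : ↥W, x ⬝ᵥ v g := by
      intro x v
      simp only [dotProduct, Finset.sum_apply, Finset.mul_sum]
      exact Finset.sum_comm
    have hquad : ∀ x : Fin n → ℝ, x ⬝ᵥ (P *ᵥ x) = ∑ g : ↥W, (F g *ᵥ x) ⬝ᵥ (F g *ᵥ x) := by
      intro x
      rw [hsumVec, hdotsum]
      refine Finset.sum_congr rfl fun g _ => ?_
      rw [← Matrix.mulVec_mulVec, Matrix.dotProduct_mulVec, Matrix.vecMul_transpose]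
    have hPpos : P.PosDef := by
      refine Matrix.PosDef.of_dotProduct_mulVec_pos ?_ ?_
      · show Pᴴ = P
        rw [conjTranspose_eq_transpose_of_trivial]; exact hPt
      · intro x hx
        have hstar : star x = x := by simp
        rw [hstar, hquad]
        have hterm : ∀ g : ↥W, 0 ≤ (F g *ᵥ x) ⬝ᵥ (F g *ᵥ x) := fun g =>
          Finset.sum_nonneg fun i _ => mul_self_nonneg _
        have h1 : (0:ℝ) < (F 1 *ᵥ x) ⬝ᵥ (F 1 *ᵥ x) := by
          rw [hF1, Matrix.one_mulVec]
          obtain ⟨i, hi⟩ := Function.ne_iff.mp hx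
          calc (0:ℝ) < x i * x i := mul_self_pos.mpr hi
            _ ≤ x ⬝ᵥ x := Finset.single_le_sum (fun j _ => mul_self_nonneg (x j)) (Finset.mem_univ i)
        calc (0:ℝ) < (F 1 *ᵥ x) ⬝ᵥ (F 1 *ᵥ x) := h1
          _ ≤ ∑ g : ↥W, (F g *ᵥ x) ⬝ᵥ (F g *ᵥ x) :=
            Finset.single_le_sum (fun g _ => hterm g) (Finset.mem_univ 1)
    have hinv : ∀ u : (Matrix (Fin n) (Fin n) ℤ)ˣ, u ∈ W → (φ ↑u)ᵀ * P * (φ ↑u) = P := by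
      intro u hu
      have hstep : (φ ↑u)ᵀ * P * (φ ↑u)
          = ∑ g : ↥W, (F (g * ⟨u, hu⟩))ᵀ * F (g * ⟨u, hu⟩) := by
        rw [hPdef, Finset.mul_sum, Finset.sum_mul]
        refine Finset.sum_congr rfl fun g _ => ?_
        have hmul : F (g * ⟨u, hu⟩) = F g * φ ↑u := by
          simp only [hF, Subgroup.coe_mul, Units.val_mul, _root_.map_mul]
        rw [hmul, transpose_mul]
        noncomm_ring
      rw [hstep, hPdef]
      exact Fintype.sum_equiv (Equiv.mulRight (⟨u, hu⟩ : ↥W)) _ _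
        (fun g => by rw [Equiv.coe_mulRight])
    have hPii : ∀ i, 0 < P i i := by
      intro i
      have hx : (Pi.single i 1 : Fin n → ℝ) ≠ 0 := by
        intro h0
        have h := congrFun h0 i
        simp at h
      have h := hPpos.dotProduct_mulVec_pos hx
      have hdd : star (Pi.single i 1 : Fin n → ℝ) ⬝ᵥ (P *ᵥ Pi.single i 1) = P i i := by
        simp [Matrix.mulVec_single, single_dotProduct]
      rwa [hdd] at h
    have hPsym : ∀ i j, P i j = P j i := by
      intro i j
      have h := congrFun (congrFun hPt j) i
      rw [Matrix.transpose_apply] at h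
      exact h
    have hgenmem : ∀ i, (s i) ∈ W := fun i => Subgroup.subset_closure ⟨i, rfl⟩
    have hPent : ∀ i j, 2 * P j i = (A i j : ℝ) * P i i := by
      intro i j
      have h := congrFun (congrFun (hinv (s i) (hgenmem i)) j) i
      rw [st10_conj_entry A i P (φ ↑(s i)) (hσ i) j i] at h
      have h2 : (A i i : ℝ) = 2 := by exact_mod_cast hAii i
      rw [h2] at h
      linarith
    set r : Fin n → ℝ := fun i => (d i : ℝ) * 2 / P i i with hr
    have hrpos : ∀ i, 0 < r i := by
      intro i
      have : (0:ℝ) < (d i : ℝ) := by exact_mod_cast hd i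
      exact div_pos (by linarith) (hPii i)
    set E : Matrix (Fin n) (Fin n) ℝ := Matrix.diagonal fun i => Real.sqrt (r i) with hE
    have hEt : Eᵀ = E := by rw [hE, Matrix.diagonal_transpose]
    have hmain : (Matrix.of fun i j => ((d i * A i j : ℤ) : ℝ)) = E * P * E := by
      ext i j
      have hentry : (E * P * E) i j = Real.sqrt (r i) * P i j * Real.sqrt (r j) := by
        rw [hE, Matrix.mul_diagonal, Matrix.diagonal_mul]
      rw [Matrix.of_apply, hentry]
      push_cast
      have E2 : 2 * P i j = (A i j : ℝ) * P i i := by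
        rw [hPsym i j]; exact hPent i j
      by_cases hz : A i j = 0
      · have haz : (A i j : ℝ) = 0 := by exact_mod_cast hz
        have hPij : P i j = 0 := by
          rw [haz, zero_mul] at E2; linarith
        rw [haz, hPij]
        ring
      · have haij : (A i j : ℝ) ≠ 0 := by exact_mod_cast hz
        have hzji : A j i ≠ 0 := by
          intro h0
          have h1 := hsym i j
          rw [h0, mul_zero] at h1
          rcases mul_eq_zero.mp h1 with h2 | h2
          · exact (hd i).ne' h2
          · exact hz h2
        have haji : (A j i : ℝ) ≠ 0 := by exact_mod_cast hzji
        have E1 : 2 * P i j = (A j i : ℝ) * P j j := hPent j i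
        have H1 : (d i : ℝ) * (A i j : ℝ) = (d j : ℝ) * (A j i : ℝ) := by
          exact_mod_cast hsym i j
        have hrij : r i = r j := by
          rw [hr]
          show (d i : ℝ) * 2 / P i i = (d j : ℝ) * 2 / P j j
          rw [div_eq_div_iff (hPii i).ne' (hPii j).ne']
          have hcancel : ((d i : ℝ) * 2 * P j j) * ((A i j : ℝ) * (A j i : ℝ))
              = ((d j : ℝ) * 2 * P i i) * ((A i j : ℝ) * (A j i : ℝ)) := by
            linear_combination (-2*(d i : ℝ)*(A i j : ℝ)) * E1
              + (2*(d j : ℝ)*(A j i : ℝ)) * E2 + (4 * P i j) * H1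
          exact mul_right_cancel₀ (mul_ne_zero haij haji) hcancel
        rw [← hrij]
        have hss : Real.sqrt (r i) * Real.sqrt (r i) = r i :=
          Real.mul_self_sqrt (le_of_lt (hrpos i))
        rw [show Real.sqrt (r i) * P i j * Real.sqrt (r i)
            = (Real.sqrt (r i) * Real.sqrt (r i)) * P i j by ring, hss, hr]
        show (d i : ℝ) * (A i j : ℝ) = (d i : ℝ) * 2 / P i i * P i j
        rw [div_mul_eq_mul_div, eq_div_iff (hPii i).ne']
        linear_combination (-(d i : ℝ)) * E2
    rw [hmain]
    refine Matrix.PosDef.of_dotProduct_mulVec_pos ?_ ?_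
    · show (E * P * E)ᴴ = E * P * E
      rw [conjTranspose_eq_transpose_of_trivial, transpose_mul, transpose_mul, hPt, hEt,
        ← mul_assoc]
    · intro x hx
      have hstar : star x = x := by simp
      rw [hstar]
      have hne : E *ᵥ x ≠ 0 := by
        intro h0
        obtain ⟨i, hi⟩ := Function.ne_iff.mp hx
        have h := congrFun h0 i
        rw [hE, Matrix.mulVec_diagonal] at h
        rcases mul_eq_zero.mp h with h2 | h2
        · exact (Real.sqrt_pos.mpr (hrpos i)).ne' h2
        · exact hi h2
      have h2 : x ⬝ᵥ ((E * P * E) *ᵥ x) = (E *ᵥ x) ⬝ᵥ (P *ᵥ (E *ᵥ x)) := by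
        rw [← Matrix.mulVec_mulVec, ← Matrix.mulVec_mulVec]
        simp only [hE, Matrix.mulVec_diagonal, dotProduct]
        exact Finset.sum_congr rfl fun i _ => by ring
      rw [h2]
      have h3 := hPpos.dotProduct_mulVec_pos hne
      rwa [show star (E *ᵥ x) = E *ᵥ x by simp] at h3
end

section
/- Let A be an n×n quasi-Cartan matrix with symmetrizer D. Then A is positive if and only if A is equivalent to a positive generalized Cartan matrix; explicitly, if and only if there exist an n×n quasi-Cartan matrix A⁰ with all off-diagonal entries ≤ 0, such that DA⁰ is symmetric and positive definite, and an integer matrix E with det(E) = ±1 such that DA = Eᵀ (DA⁰) E. -/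
open Matrix

namespace St11Aux


variable {n : ℕ}

def LexLt (v w : Fin n → ℤ) : Prop := ∃ t, (∀ u, u < t → v u = w u) ∧ v t < w t

def LexPos (v : Fin n → ℤ) : Prop := LexLt 0 v

def LexNNeg (v : Fin n → ℤ) : Prop := v = 0 ∨ LexPos v

lemma lexLt_irrefl (v : Fin n → ℤ) : ¬ LexLt v v := by
  rintro ⟨t, _, h⟩; exact lt_irrefl _ h

lemma lexLt_trans {u v w : Fin n → ℤ} (h1 : LexLt u v) (h2 : LexLt v w) : LexLt u w := by
  obtain ⟨t1, he1, hl1⟩ := h1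
  obtain ⟨t2, he2, hl2⟩ := h2
  rcases lt_trichotomy t1 t2 with h | h | h
  · exact ⟨t1, fun s hs => (he1 s hs).trans (he2 s (hs.trans h)),
      by rw [← he2 t1 h]; exact hl1⟩
  · subst h; exact ⟨t1, fun s hs => (he1 s hs).trans (he2 s hs), hl1.trans hl2⟩
  · exact ⟨t2, fun s hs => (he1 s (hs.trans h)).trans (he2 s hs),
      by rw [he1 t2 h]; exact hl2⟩

lemma lexLt_or_of_ne {v w : Fin n → ℤ} (h : v ≠ w) : LexLt v w ∨ LexLt w v := by
  have hne : (Finset.univ.filter fun t => v t ≠ w t).Nonempty := by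
    obtain ⟨t, ht⟩ := Function.ne_iff.mp h
    exact ⟨t, by simp [ht]⟩
  set t0 := (Finset.univ.filter fun t => v t ≠ w t).min' hne with ht0
  have hmem : v t0 ≠ w t0 := by
    have := (Finset.univ.filter fun t => v t ≠ w t).min'_mem hne
    simpa using this
  have hkey : ∀ u, u < t0 → v u = w u := by
    intro u hu
    by_contra hne'
    have : t0 ≤ u := Finset.min'_le _ _ (by simp [hne'])
    exact absurd hu (not_lt.mpr this)
  rcases lt_or_gt_of_ne hmem with h' | h'
  · exact Or.inl ⟨t0, hkey, h'⟩
  · exact Or.inr ⟨t0, fun u hu => (hkey u hu).symm, h'⟩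

lemma lexLt_add_iff (u : Fin n → ℤ) {v w : Fin n → ℤ} :
    LexLt (v + u) (w + u) ↔ LexLt v w := by
  constructor
  · rintro ⟨t, he, hl⟩
    exact ⟨t, fun s hs => by have := he s hs; simpa using this,
      by have := hl; simp only [Pi.add_apply] at this; omega⟩
  · rintro ⟨t, he, hl⟩
    exact ⟨t, fun s hs => by simp [he s hs], by simp only [Pi.add_apply, Pi.zero_apply]; omega⟩

lemma lexLt_iff_sub {v w : Fin n → ℤ} : LexLt v w ↔ LexPos (w - v) := by
  rw [LexPos, show w - v = w + (-v) by abel, show (0 : Fin n → ℤ) = v + (-v) by abel,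
    lexLt_add_iff]

lemma lexPos_neg_of_lexLt_zero {v : Fin n → ℤ} (h : LexLt v 0) : LexPos (-v) := by
  have := lexLt_iff_sub.mp h
  simpa using this

lemma lexPos_or_of_ne {v : Fin n → ℤ} (h : v ≠ 0) : LexPos v ∨ LexPos (-v) := by
  rcases lexLt_or_of_ne h with h' | h'
  · exact Or.inr (lexPos_neg_of_lexLt_zero h')
  · exact Or.inl h'

lemma lexPos_add {v w : Fin n → ℤ} (hv : LexPos v) (hw : LexPos w) : LexPos (v + w) := by
  obtain ⟨t1, he1, hl1⟩ := hv
  obtain ⟨t2, he2, hl2⟩ := hw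
  simp only [Pi.zero_apply] at he1 he2 hl1 hl2
  rcases le_total t1 t2 with h | h
  · refine ⟨t1, fun s hs => ?_, ?_⟩
    · simp [← he1 s hs, ← he2 s (lt_of_lt_of_le hs h)]
    · rcases eq_or_lt_of_le h with rfl | h'
      · simp only [Pi.add_apply, Pi.zero_apply]; omega
      · have := he2 t1 h'; simp only [Pi.add_apply, Pi.zero_apply]; omega
  · refine ⟨t2, fun s hs => ?_, ?_⟩
    · simp [← he2 s hs, ← he1 s (lt_of_lt_of_le hs h)]
    · rcases eq_or_lt_of_le h with rfl | h'
      · simp only [Pi.add_apply, Pi.zero_apply]; omega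
      · have := he1 t2 h'; simp only [Pi.add_apply, Pi.zero_apply]; omega

lemma lexPos_smul {c : ℤ} (hc : 0 < c) {v : Fin n → ℤ} (h : LexPos v) : LexPos (c • v) := by
  obtain ⟨t, he, hl⟩ := h
  simp only [Pi.zero_apply] at he hl
  refine ⟨t, fun s hs => ?_, ?_⟩
  · simp [← he s hs]
  · simp only [Pi.smul_apply, smul_eq_mul, Pi.zero_apply]
    exact mul_pos hc hl

lemma lexNNeg_smul {c : ℤ} (hc : 0 < c) {v : Fin n → ℤ} (h : LexNNeg v) : LexNNeg (c • v) := by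
  rcases h with rfl | h
  · left; simp
  · right; exact lexPos_smul hc h

lemma lexNNeg_add {v w : Fin n → ℤ} (hv : LexNNeg v) (hw : LexNNeg w) : LexNNeg (v + w) := by
  rcases hv with rfl | hv <;> rcases hw with rfl | hw
  · left; simp
  · right; simpa using hw
  · right; simpa using hv
  · right; exact lexPos_add hv hw

lemma not_lexPos_neg_of_lexNNeg {v : Fin n → ℤ} (h : LexNNeg v) (h' : LexPos (-v)) : False := by
  rcases h with rfl | h
  · rw [neg_zero] at h'; exact lexLt_irrefl _ h'
  · have := lexPos_add h h'
    rw [add_neg_cancel] at this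
    exact lexLt_irrefl _ this



variable {n : ℕ}

def bil (C : Matrix (Fin n) (Fin n) ℤ) (u v : Fin n → ℤ) : ℤ := u ⬝ᵥ (C *ᵥ v)

variable {C : Matrix (Fin n) (Fin n) ℤ}

lemma bil_add_left (u v w : Fin n → ℤ) : bil C (u + v) w = bil C u w + bil C v w := by
  simp [bil, add_dotProduct]

lemma bil_add_right (u v w : Fin n → ℤ) : bil C u (v + w) = bil C u v + bil C u w := by
  simp [bil, mulVec_add, dotProduct_add]

lemma bil_smul_left (c : ℤ) (u w : Fin n → ℤ) : bil C (c • u) w = c * bil C u w := by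
  show (c • u) ⬝ᵥ (C *ᵥ w) = c * (u ⬝ᵥ (C *ᵥ w))
  rw [smul_dotProduct, smul_eq_mul]

lemma bil_smul_right (c : ℤ) (u w : Fin n → ℤ) : bil C u (c • w) = c * bil C u w := by
  show u ⬝ᵥ (C *ᵥ (c • w)) = c * (u ⬝ᵥ (C *ᵥ w))
  rw [mulVec_smul, dotProduct_smul, smul_eq_mul]

lemma bil_sub_left (u v w : Fin n → ℤ) : bil C (u - v) w = bil C u w - bil C v w := by
  simp [bil, sub_dotProduct]

lemma bil_sub_right (u v w : Fin n → ℤ) : bil C u (v - w) = bil C u v - bil C u w := by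
  simp [bil, mulVec_sub, dotProduct_sub]

lemma bil_zero_left (w : Fin n → ℤ) : bil C 0 w = 0 := by simp [bil]

lemma bil_zero_right (u : Fin n → ℤ) : bil C u 0 = 0 := by simp [bil]

lemma bil_sum_left {ι : Type*} (s : Finset ι) (f : ι → Fin n → ℤ) (w : Fin n → ℤ) :
    bil C (∑ k ∈ s, f k) w = ∑ k ∈ s, bil C (f k) w := by
  classical
  induction s using Finset.induction with
  | empty => simp [bil_zero_left]
  | insert _ _ h ih => rw [Finset.sum_insert h, bil_add_left, ih, Finset.sum_insert h]

lemma bil_sum_right {ι : Type*} (s : Finset ι) (f : ι → Fin n → ℤ) (u : Fin n → ℤ) :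
    bil C u (∑ k ∈ s, f k) = ∑ k ∈ s, bil C u (f k) := by
  classical
  induction s using Finset.induction with
  | empty => simp [bil_zero_right]
  | insert _ _ h ih => rw [Finset.sum_insert h, bil_add_right, ih, Finset.sum_insert h]

lemma bil_comm (hsymC : Cᵀ = C) (u v : Fin n → ℤ) : bil C u v = bil C v u := by
  have hC : ∀ i j, C i j = C j i := fun i j =>
    (congrFun (congrFun hsymC j) i : C i j = C j i)
  simp only [bil, dotProduct, mulVec, Finset.mul_sum]
  rw [Finset.sum_comm]
  refine Finset.sum_congr rfl fun i _ => Finset.sum_congr rfl fun j _ => ?_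
  rw [hC j i]; ring

/-- cast of the quadratic value to `ℝ` -/
lemma bil_cast (u v : Fin n → ℤ) :
    ((bil C u v : ℤ) : ℝ) =
      (fun t => ((u t : ℤ) : ℝ)) ⬝ᵥ ((C.map fun x : ℤ => (x : ℝ)) *ᵥ fun t => ((v t : ℤ) : ℝ)) := by
  simp only [bil, dotProduct, mulVec, Matrix.map_apply, Finset.mul_sum]
  push_cast
  rfl

lemma bil_pos (hC : (C.map fun x : ℤ => (x : ℝ)).PosDef) {v : Fin n → ℤ} (hv : v ≠ 0) :
    0 < bil C v v := by
  have hvr : (fun t => ((v t : ℤ) : ℝ)) ≠ 0 := by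
    intro h
    apply hv
    funext t
    simpa using congrFun h t
  have := hC.dotProduct_mulVec_pos hvr
  rw [star_trivial] at this
  rw [← bil_cast] at this
  exact_mod_cast this

lemma bil_nonneg (hC : (C.map fun x : ℤ => (x : ℝ)).PosDef) (v : Fin n → ℤ) :
    0 ≤ bil C v v := by
  by_cases hv : v = 0
  · subst hv; simp [bil_zero_left]
  · exact (bil_pos hC hv).le

lemma finite_bound (hC : (C.map fun x : ℤ => (x : ℝ)).PosDef) (B : ℤ) :
    {v : Fin n → ℤ | bil C v v ≤ B}.Finite := by
  rcases Nat.eq_zero_or_pos n with hn | hn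
  · subst hn
    apply Set.Subsingleton.finite
    intro a _ b _
    funext t
    exact absurd t.2 (by omega)
  haveI : Nonempty (Fin n) := ⟨⟨0, hn⟩⟩
  set Cr := C.map fun x : ℤ => (x : ℝ) with hCr
  set f : (Fin n → ℝ) → ℝ := fun v => v ⬝ᵥ (Cr *ᵥ v) with hf
  have hfc : Continuous f := by
    have : f = fun v => ∑ i, v i * ∑ j, Cr i j * v j := rfl
    rw [this]
    exact continuous_finset_sum _ fun i _ =>
      (continuous_apply i).mul
        (continuous_finset_sum _ fun j _ => continuous_const.mul (continuous_apply j))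
  have hne : (Metric.sphere (0 : Fin n → ℝ) 1).Nonempty :=
    NormedSpace.sphere_nonempty.mpr zero_le_one
  obtain ⟨u, hu, hmin⟩ := (isCompact_sphere (0 : Fin n → ℝ) 1).exists_isMinOn hne
    hfc.continuousOn
  have hu1 : ‖u‖ = 1 := by simpa using mem_sphere_zero_iff_norm.mp hu
  have hu0 : u ≠ 0 := by
    intro h; rw [h, norm_zero] at hu1; norm_num at hu1
  set m := f u with hm
  have hmpos : 0 < m := by
    have := hC.dotProduct_mulVec_pos hu0
    rwa [star_trivial] at this
  have key : ∀ v : Fin n → ℝ, v ≠ 0 → m * ‖v‖ ^ 2 ≤ f v := by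
    intro v hv
    have hc : 0 < ‖v‖ := norm_pos_iff.mpr hv
    set w := ‖v‖⁻¹ • v with hw
    have hwmem : w ∈ Metric.sphere (0 : Fin n → ℝ) 1 := by
      rw [mem_sphere_zero_iff_norm, hw, norm_smul, norm_inv, norm_norm]
      field_simp
    have hfw : m ≤ f w := hmin hwmem
    have hveq : v = ‖v‖ • w := by rw [hw, smul_inv_smul₀ hc.ne']
    have hfv : f v = ‖v‖ ^ 2 * f w := by
      conv_lhs => rw [hveq]
      show (‖v‖ • w) ⬝ᵥ (Cr *ᵥ (‖v‖ • w)) = _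
      rw [mulVec_smul, dotProduct_smul, smul_dotProduct]
      simp [smul_eq_mul]; ring
    nlinarith [sq_nonneg ‖v‖]
  set K : ℤ := max 1 ⌈(B : ℝ) / m⌉ with hK
  have hK1 : 1 ≤ K := le_max_left _ _
  have hsub : {v : Fin n → ℤ | bil C v v ≤ B} ⊆
      Set.pi Set.univ fun _ : Fin n => Set.Icc (-K) K := by
    intro v hv
    rw [Set.mem_univ_pi]
    intro t
    by_cases hv0 : v = 0
    · subst hv0; simp [Set.mem_Icc]; omega
    set vr : Fin n → ℝ := fun t => ((v t : ℤ) : ℝ) with hvr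
    have hvr0 : vr ≠ 0 := by
      intro h; apply hv0; funext s
      have h8 := congrFun h s
      rw [hvr] at h8
      simpa using h8
    have h1 : m * ‖vr‖ ^ 2 ≤ f vr := key vr hvr0
    have h2 : f vr = ((bil C v v : ℤ) : ℝ) := (bil_cast v v).symm
    have h3 : ((bil C v v : ℤ) : ℝ) ≤ (B : ℝ) := by exact_mod_cast hv
    have h4 : ‖vr‖ ^ 2 ≤ (B : ℝ) / m := by
      rw [le_div_iff₀ hmpos]; nlinarith
    have h5 : |((v t : ℤ) : ℝ)| ≤ ‖vr‖ := by
      have := norm_le_pi_norm vr t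
      simpa [hvr, Real.norm_eq_abs] using this
    have h6 : ((v t : ℤ) : ℝ) ^ 2 ≤ (K : ℝ) := by
      calc ((v t : ℤ) : ℝ) ^ 2 = |((v t : ℤ) : ℝ)| ^ 2 := (sq_abs _).symm
        _ ≤ ‖vr‖ ^ 2 := by nlinarith [abs_nonneg ((v t : ℤ) : ℝ), norm_nonneg vr]
        _ ≤ (B : ℝ) / m := h4
        _ ≤ (⌈(B : ℝ) / m⌉ : ℝ) := Int.le_ceil _
        _ ≤ (K : ℝ) := by exact_mod_cast le_max_right 1 ⌈(B : ℝ) / m⌉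
    have h7 : (v t) ^ 2 ≤ K := by exact_mod_cast h6
    rw [Set.mem_Icc]
    constructor <;> nlinarith [h7, hK1]
  exact (Set.Finite.pi fun _ => Set.finite_Icc _ _).subset hsub


section Algorithm

variable {C : Matrix (Fin n) (Fin n) ℤ} {d : Fin n → ℤ}

def col (F : Matrix (Fin n) (Fin n) ℤ) (k : Fin n) : Fin n → ℤ := fun t => F t k

def colSum (F : Matrix (Fin n) (Fin n) ℤ) : Fin n → ℤ := ∑ k, col F k

structure Good (C : Matrix (Fin n) (Fin n) ℤ) (d : Fin n → ℤ)
    (F : Matrix (Fin n) (Fin n) ℤ) : Prop where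
  det : F.det = 1 ∨ F.det = -1
  norm : ∀ j, bil C (col F j) (col F j) = 2 * d j
  dvd : ∀ i j, d i ∣ bil C (col F i) (col F j)
  pos : ∀ j, LexPos (col F j)

lemma col_mulVec (F : Matrix (Fin n) (Fin n) ℤ) (k : Fin n) :
    F *ᵥ Pi.single k 1 = col F k := by
  funext t
  simp [col, mulVec_single]

lemma col_comb_ne {F : Matrix (Fin n) (Fin n) ℤ} (hdet : F.det = 1 ∨ F.det = -1)
    {i j : Fin n} (hij : i ≠ j) {p q : ℤ} (hp : p ≠ 0) :
    p • col F i + q • col F j ≠ 0 := by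
  intro h
  have hu : IsUnit F.det := Int.isUnit_iff.mpr hdet
  have h2 : F *ᵥ (p • Pi.single i 1 + q • Pi.single j 1) = 0 := by
    rw [mulVec_add, mulVec_smul, mulVec_smul, col_mulVec, col_mulVec]
    exact h
  have h3 : (p • Pi.single i 1 + q • Pi.single j 1 : Fin n → ℤ) = 0 := by
    have h4 := congrArg (fun w => F⁻¹ *ᵥ w) h2
    simpa [mulVec_mulVec, nonsing_inv_mul F hu, one_mulVec] using h4
  have h5 := congrFun h3 i
  simp [Pi.single_apply, hij, Ne.symm hij] at h5
  exact hp h5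

lemma gram_eq (F : Matrix (Fin n) (Fin n) ℤ) (i j : Fin n) :
    (Fᵀ * C * F) i j = bil C (col F i) (col F j) := by
  have h1 : (Fᵀ * C * F) i j = ∑ s, ∑ t, F t i * C t s * F s j := by
    simp only [Matrix.mul_apply, transpose_apply, Finset.sum_mul]
  have h2 : bil C (col F i) (col F j) = ∑ t, ∑ s, F t i * (C t s * F s j) := by
    simp only [bil, dotProduct, mulVec, col, Finset.mul_sum]
  rw [h1, h2, Finset.sum_comm]
  exact Finset.sum_congr rfl fun t _ => Finset.sum_congr rfl fun s _ => by ring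

lemma bil_expand (hsymC : Cᵀ = C) (x y : Fin n → ℤ) (ε aa : ℤ) :
    bil C (ε • (y - aa • x)) (ε • (y - aa • x)) =
      ε * ε * (bil C y y - 2 * aa * bil C x y + aa * aa * bil C x x) := by
  simp only [bil_smul_left, bil_smul_right, bil_sub_left, bil_sub_right]
  rw [bil_comm hsymC y x]
  ring

lemma cs_weak (hsymC : Cᵀ = C) (hC : (C.map fun x : ℤ => (x : ℝ)).PosDef)
    {u v : Fin n → ℤ} {p q : ℤ} (hu : bil C u u = 2 * p) (hv : bil C v v = 2 * q)
    (hq : 0 < q) : bil C u v * bil C u v ≤ 4 * (p * q) := by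
  have h0 : 0 ≤ bil C ((2 * q) • u - (bil C u v) • v) ((2 * q) • u - (bil C u v) • v) :=
    bil_nonneg hC _
  simp only [bil_sub_left, bil_sub_right, bil_smul_left, bil_smul_right] at h0
  rw [bil_comm hsymC v u, hu, hv] at h0
  nlinarith [h0, hq]

lemma gram_bound (hsymC : Cᵀ = C) (hC : (C.map fun x : ℤ => (x : ℝ)).PosDef)
    (hd : ∀ i, 0 < d i) {F : Matrix (Fin n) (Fin n) ℤ} (hF : Good C d F) :
    bil C (colSum F) (colSum F) ≤ ∑ k, ∑ l, (d k + d l) := by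
  rw [colSum, bil_sum_left]
  refine Finset.sum_le_sum fun k _ => ?_
  rw [bil_sum_right]
  refine Finset.sum_le_sum fun l _ => ?_
  have hsq := cs_weak hsymC hC (hF.norm k) (hF.norm l) (hd l)
  nlinarith [hd k, hd l, hsq, sq_nonneg (d k - d l), sq_nonneg (d k + d l)]

lemma move {F : Matrix (Fin n) (Fin n) ℤ} (hsymC : Cᵀ = C)
    (hF : Good C d F) {i j : Fin n} (hij : i ≠ j) {a : ℤ}
    (ha : bil C (col F i) (col F j) = d i * a)
    (hdj : d j ∣ bil C (col F i) (col F j))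
    (ε : ℤ) (hε : ε = 1 ∨ ε = -1)
    (hp : LexPos (ε • (col F j - a • col F i))) :
    ∃ F', Good C d F' ∧
      colSum F' = colSum F - col F j + ε • (col F j - a • col F i) := by
  classical
  set T : Matrix (Fin n) (Fin n) ℤ := transvection i j (-a) with hT
  set D : Matrix (Fin n) (Fin n) ℤ := Matrix.diagonal (fun k => if k = j then ε else 1) with hD
  set G : Matrix (Fin n) (Fin n) ℤ := F * T * D with hG
  have hcol_ne : ∀ k, k ≠ j → col G k = col F k := by
    intro k hk
    funext t
    show (F * T * D) t k = F t k
    rw [mul_diagonal, hT, mul_transvection_apply_of_ne i j t k hk]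
    simp [hk]
  have hcol_j : col G j = ε • (col F j - a • col F i) := by
    funext t
    show (F * T * D) t j = _
    rw [mul_diagonal, hT, mul_transvection_apply_same i j t (-a)]
    simp [col]
    ring
  have hdet : G.det = 1 ∨ G.det = -1 := by
    have h1 : G.det = F.det * 1 * ε := by
      rw [hG, det_mul, det_mul, hT, det_transvection_of_ne i j hij, hD, det_diagonal]
      congr 1
      rw [Finset.prod_ite_eq' Finset.univ j (fun _ => ε)]
      simp
    rcases hF.det with h2 | h2 <;> rcases hε with h3 | h3 <;>
      rw [h1, h2, h3] <;> norm_num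
  -- divisibility of c by d j
  refine ⟨G, ⟨hdet, ?_, ?_, ?_⟩, ?_⟩
  · -- norms
    intro k
    by_cases hk : k = j
    · rw [hk, hcol_j, bil_expand hsymC]
      have hε2 : ε * ε = 1 := by rcases hε with h | h <;> rw [h] <;> norm_num
      rw [hε2, hF.norm j, hF.norm i, ha]
      ring
    · rw [hcol_ne k hk]; exact hF.norm k
  · -- divisibility
    intro k l
    by_cases hk : k = j <;> by_cases hl : l = j
    · rw [hk, hl, hcol_j, bil_expand hsymC]
      have hε2 : ε * ε = 1 := by rcases hε with h | h <;> rw [h] <;> norm_num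
      rw [hε2, hF.norm j, hF.norm i, ha]
      exact ⟨2, by ring⟩
    · -- k = j, l ≠ j
      rw [hk, hcol_ne l hl, hcol_j]
      rw [bil_smul_left, bil_sub_left, bil_smul_left]
      obtain ⟨M, hM⟩ := hF.dvd i l
      obtain ⟨m', hm'⟩ := hdj
      refine Dvd.dvd.mul_left ?_ ε
      refine dvd_sub (hF.dvd j l) ?_
      rw [hM]
      refine ⟨m' * M, ?_⟩
      have : a * (d i * M) = (d i * a) * M := by ring
      rw [this, ← ha, hm']
      ring
    · -- k ≠ j, l = j
      rw [hl, hcol_ne k hk, hcol_j]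
      rw [bil_smul_right, bil_sub_right, bil_smul_right]
      refine Dvd.dvd.mul_left ?_ ε
      exact dvd_sub (hF.dvd k j) (Dvd.dvd.mul_left (hF.dvd k i) a)
    · rw [hcol_ne k hk, hcol_ne l hl]; exact hF.dvd k l
  · -- lex positivity
    intro k
    by_cases hk : k = j
    · rw [hk, hcol_j]; exact hp
    · rw [hcol_ne k hk]; exact hF.pos k
  · -- column sum
    have h1 : colSum G = (∑ k ∈ Finset.univ.erase j, col G k) + col G j := by
      rw [colSum, ← Finset.sum_erase_add Finset.univ _ (Finset.mem_univ j)]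
    have h2 : colSum F = (∑ k ∈ Finset.univ.erase j, col F k) + col F j := by
      rw [colSum, ← Finset.sum_erase_add Finset.univ _ (Finset.mem_univ j)]
    have h3 : (∑ k ∈ Finset.univ.erase j, col G k) = ∑ k ∈ Finset.univ.erase j, col F k :=
      Finset.sum_congr rfl fun k hk => hcol_ne k (Finset.ne_of_mem_erase hk)
    rw [h1, h2, h3, hcol_j]
    abel

lemma step (hsymC : Cᵀ = C) (hC : (C.map fun x : ℤ => (x : ℝ)).PosDef)
    (hd : ∀ i, 0 < d i) {F : Matrix (Fin n) (Fin n) ℤ} (hF : Good C d F)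
    {i j : Fin n} (hij : i ≠ j) (hc : 0 < bil C (col F i) (col F j)) :
    ∃ F', Good C d F' ∧ LexLt (colSum F') (colSum F) := by
  classical
  obtain ⟨a, ha⟩ := hF.dvd i j
  obtain ⟨a', ha'0eq⟩ := hF.dvd j i
  have hyx : bil C (col F j) (col F i) = bil C (col F i) (col F j) :=
    bil_comm hsymC _ _
  have hc3 : bil C (col F i) (col F j) = d j * a' := by rw [← hyx, ha'0eq]
  have hdjc : d j ∣ bil C (col F i) (col F j) := ⟨a', hc3⟩
  have hdic : d i ∣ bil C (col F j) (col F i) := ⟨a, by rw [hyx, ha]⟩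
  have ha0 : 0 < a := by
    by_contra h
    push_neg at h
    have h2 : d i * a ≤ 0 := mul_nonpos_of_nonneg_of_nonpos (hd i).le h
    rw [← ha] at h2
    linarith
  have ha'0 : 0 < a' := by
    by_contra h
    push_neg at h
    have h2 : d j * a' ≤ 0 := mul_nonpos_of_nonneg_of_nonpos (hd j).le h
    rw [← hc3] at h2
    linarith
  -- strict Cauchy-Schwarz gives a * a' ≤ 3
  have hv0 : (2 * d j) • col F i - (bil C (col F i) (col F j)) • col F j ≠ 0 := by
    have h2 := col_comb_ne hF.det hij
      (p := 2 * d j) (q := -(bil C (col F i) (col F j))) (by have := hd j; omega)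
    intro h
    apply h2
    rw [← h]
    simp [sub_eq_add_neg, neg_smul]
  have hq := bil_pos hC hv0
  simp only [bil_sub_left, bil_sub_right, bil_smul_left, bil_smul_right] at hq
  rw [hyx, hF.norm i, hF.norm j] at hq
  have hc2 : bil C (col F i) (col F j) * bil C (col F i) (col F j) < 4 * (d i * d j) := by
    nlinarith [hq, hd j]
  have hca : bil C (col F i) (col F j) * bil C (col F i) (col F j)
      = (d i * d j) * (a * a') := by
    linear_combination (d j * a') * ha + (bil C (col F i) (col F j)) * hc3
  have haa : a * a' ≤ 3 := by
    have h5 : (d i * d j) * (a * a') < (d i * d j) * 4 := by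
      rw [← hca]; linarith
    have h6 := lt_of_mul_lt_mul_left h5 (mul_pos (hd i) (hd j)).le
    omega
  by_cases h1 : LexPos (col F j - a • col F i)
  · obtain ⟨F', hF', hsum⟩ := move hsymC hF hij ha hdjc 1 (Or.inl rfl)
      (by rw [one_smul]; exact h1)
    refine ⟨F', hF', ?_⟩
    rw [lexLt_iff_sub]
    have h7 : colSum F - colSum F' = a • col F i := by rw [hsum, one_smul]; abel
    rw [h7]
    exact lexPos_smul ha0 (hF.pos i)
  by_cases h2 : LexPos (col F i - a' • col F j)
  · obtain ⟨F', hF', hsum⟩ := move hsymC hF hij.symm ha'0eq hdic 1 (Or.inl rfl)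
      (by rw [one_smul]; exact h2)
    refine ⟨F', hF', ?_⟩
    rw [lexLt_iff_sub]
    have h7 : colSum F - colSum F' = a' • col F j := by rw [hsum, one_smul]; abel
    rw [h7]
    exact lexPos_smul ha'0 (hF.pos j)
  · have hne1 : col F j - a • col F i ≠ 0 := by
      have h8 := col_comb_ne hF.det hij.symm (p := (1 : ℤ)) (q := -a) one_ne_zero
      intro h
      apply h8
      rw [← h]
      simp [sub_eq_add_neg, neg_smul]
    have hpos1 : LexPos (a • col F i - col F j) := by
      have h9 := (lexPos_or_of_ne hne1).resolve_left h1
      rwa [neg_sub] at h9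
    have hne2 : col F i - a' • col F j ≠ 0 := by
      have h8 := col_comb_ne hF.det hij (p := (1 : ℤ)) (q := -a') one_ne_zero
      intro h
      apply h8
      rw [← h]
      simp [sub_eq_add_neg, neg_smul]
    have hpos2 : LexPos (a' • col F j - col F i) := by
      have h9 := (lexPos_or_of_ne hne2).resolve_left h2
      rwa [neg_sub] at h9
    by_cases h3 : LexPos ((2 : ℤ) • col F j - a • col F i)
    · obtain ⟨F', hF', hsum⟩ := move hsymC hF hij ha hdjc (-1) (Or.inr rfl)
        (by rw [neg_one_smul, neg_sub]; exact hpos1)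
      refine ⟨F', hF', ?_⟩
      rw [lexLt_iff_sub]
      have h7 : colSum F - colSum F' = (2 : ℤ) • col F j - a • col F i := by
        rw [hsum, neg_one_smul]
        abel
      rw [h7]
      exact h3
    by_cases h4 : LexPos ((2 : ℤ) • col F i - a' • col F j)
    · obtain ⟨F', hF', hsum⟩ := move hsymC hF hij.symm ha'0eq hdic (-1) (Or.inr rfl)
        (by rw [neg_one_smul, neg_sub]; exact hpos2)
      refine ⟨F', hF', ?_⟩
      rw [lexLt_iff_sub]
      have h7 : colSum F - colSum F' = (2 : ℤ) • col F i - a' • col F j := by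
        rw [hsum, neg_one_smul]
        abel
      rw [h7]
      exact h4
    · exfalso
      have hnn1 : LexNNeg (a • col F i - (2 : ℤ) • col F j) := by
        rcases eq_or_ne ((2 : ℤ) • col F j - a • col F i) 0 with h | h
        · left
          have h10 : a • col F i - (2 : ℤ) • col F j
              = -((2 : ℤ) • col F j - a • col F i) := by abel
          rw [h10, h, neg_zero]
        · right
          have h9 := (lexPos_or_of_ne h).resolve_left h3
          rwa [neg_sub] at h9
      have hnn2 : LexNNeg (a' • col F j - (2 : ℤ) • col F i) := by
        rcases eq_or_ne ((2 : ℤ) • col F i - a' • col F j) 0 with h | h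
        · left
          have h10 : a' • col F j - (2 : ℤ) • col F i
              = -((2 : ℤ) • col F i - a' • col F j) := by abel
          rw [h10, h, neg_zero]
        · right
          have h9 := (lexPos_or_of_ne h).resolve_left h4
          rwa [neg_sub] at h9
      have hcomb : a' • (a • col F i - (2 : ℤ) • col F j)
          + (2 : ℤ) • (a' • col F j - (2 : ℤ) • col F i)
          = -((4 - a * a') • col F i) := by
        funext t
        simp only [Pi.add_apply, Pi.sub_apply, Pi.smul_apply, Pi.neg_apply, smul_eq_mul]
        ring
      have hnn3 : LexNNeg (-((4 - a * a') • col F i)) := by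
        rw [← hcomb]
        exact lexNNeg_add (lexNNeg_smul ha'0 hnn1) (lexNNeg_smul (by norm_num) hnn2)
      have hpos3 : LexPos ((4 - a * a') • col F i) :=
        lexPos_smul (by omega) (hF.pos i)
      exact not_lexPos_neg_of_lexNNeg hnn3 (by rwa [neg_neg])

lemma good_one (hdiagC : ∀ j, C j j = 2 * d j) (hdvdC : ∀ i j, d i ∣ C i j) :
    Good C d (1 : Matrix (Fin n) (Fin n) ℤ) := by
  have hcol1 : ∀ k, col (1 : Matrix (Fin n) (Fin n) ℤ) k = Pi.single k 1 := by
    intro k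
    funext t
    simp [col, Matrix.one_apply, Pi.single_apply, eq_comm]
  have hbil1 : ∀ i j, bil C (col (1 : Matrix (Fin n) (Fin n) ℤ) i)
      (col (1 : Matrix (Fin n) (Fin n) ℤ) j) = C i j := by
    intro i j
    rw [hcol1, hcol1]
    show Pi.single i 1 ⬝ᵥ (C *ᵥ Pi.single j 1) = C i j
    rw [mulVec_single, single_dotProduct]
    simp
  refine ⟨Or.inl Matrix.det_one, ?_, ?_, ?_⟩
  · intro j; rw [hbil1]; exact hdiagC j
  · intro i j; rw [hbil1]; exact hdvdC i j
  · intro k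
    rw [hcol1]
    refine ⟨k, fun u hu => ?_, ?_⟩
    · simp [Pi.single_apply, (ne_of_lt hu).symm]
    · simp

open scoped Classical in
lemma main_ind (hsymC : Cᵀ = C) (hC : (C.map fun x : ℤ => (x : ℝ)).PosDef)
    (hd : ∀ i, 0 < d i) (T : Finset (Fin n → ℤ))
    (hT : ∀ F, Good C d F → colSum F ∈ T) :
    ∀ (N : ℕ) (F), Good C d F → (T.filter fun v => LexLt v (colSum F)).card ≤ N →
      ∃ F', Good C d F' ∧ ∀ i j, i ≠ j → bil C (col F' i) (col F' j) ≤ 0 := by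
  intro N
  induction N with
  | zero =>
    intro F hF hcard
    by_cases hbad : ∃ i j, i ≠ j ∧ 0 < bil C (col F i) (col F j)
    · exfalso
      obtain ⟨i, j, hij, hpos⟩ := hbad
      obtain ⟨F', hF', hlt⟩ := step hsymC hC hd hF hij hpos
      have hsub : (T.filter fun v => LexLt v (colSum F')) ⊂
          (T.filter fun v => LexLt v (colSum F)) := by
        constructor
        · intro v hv
          rw [Finset.mem_filter] at hv ⊢
          exact ⟨hv.1, lexLt_trans hv.2 hlt⟩
        · intro hcontra
          have h1 : colSum F' ∈ T.filter fun v => LexLt v (colSum F) :=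
            Finset.mem_filter.mpr ⟨hT F' hF', hlt⟩
          have h2 := hcontra h1
          rw [Finset.mem_filter] at h2
          exact lexLt_irrefl _ h2.2
      have := Finset.card_lt_card hsub
      omega
    · push_neg at hbad
      exact ⟨F, hF, hbad⟩
  | succ N ih =>
    intro F hF hcard
    by_cases hbad : ∃ i j, i ≠ j ∧ 0 < bil C (col F i) (col F j)
    · obtain ⟨i, j, hij, hpos⟩ := hbad
      obtain ⟨F', hF', hlt⟩ := step hsymC hC hd hF hij hpos
      have hsub : (T.filter fun v => LexLt v (colSum F')) ⊂
          (T.filter fun v => LexLt v (colSum F)) := by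
        constructor
        · intro v hv
          rw [Finset.mem_filter] at hv ⊢
          exact ⟨hv.1, lexLt_trans hv.2 hlt⟩
        · intro hcontra
          have h1 : colSum F' ∈ T.filter fun v => LexLt v (colSum F) :=
            Finset.mem_filter.mpr ⟨hT F' hF', hlt⟩
          have h2 := hcontra h1
          rw [Finset.mem_filter] at h2
          exact lexLt_irrefl _ h2.2
      have := Finset.card_lt_card hsub
      exact ih F' hF' (by omega)
    · push_neg at hbad
      exact ⟨F, hF, hbad⟩

lemma forward_main (hsymC : Cᵀ = C) (hC : (C.map fun x : ℤ => (x : ℝ)).PosDef)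
    (hd : ∀ i, 0 < d i) (hdiagC : ∀ j, C j j = 2 * d j) (hdvdC : ∀ i j, d i ∣ C i j) :
    ∃ F, Good C d F ∧ (F.det = 1 ∨ F.det = -1) ∧
      ∀ i j, i ≠ j → bil C (col F i) (col F j) ≤ 0 := by
  classical
  set B : ℤ := ∑ k, ∑ l, (d k + d l) with hB
  set T : Finset (Fin n → ℤ) := (finite_bound hC B).toFinset with hTdef
  have hT : ∀ F, Good C d F → colSum F ∈ T := by
    intro F hF
    rw [hTdef, Set.Finite.mem_toFinset]
    exact gram_bound hsymC hC hd hF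
  obtain ⟨F, hF, hnonpos⟩ := main_ind hsymC hC hd T hT
    ((T.filter fun v => LexLt v (colSum (1 : Matrix (Fin n) (Fin n) ℤ))).card)
    1 (good_one hdiagC hdvdC) le_rfl
  exact ⟨F, hF, hF.det, hnonpos⟩

lemma posdef_conj {P M : Matrix (Fin n) (Fin n) ℝ} (hM : M.PosDef) (hP : IsUnit P.det) :
    (Pᵀ * M * P).PosDef := by
  rw [Matrix.posDef_iff_dotProduct_mulVec]
  constructor
  · show (Pᵀ * M * P)ᴴ = Pᵀ * M * P
    rw [conjTranspose_eq_transpose_of_trivial, transpose_mul, transpose_mul,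
      transpose_transpose]
    have hMt : Mᵀ = M := by
      have := hM.1
      rwa [IsHermitian, conjTranspose_eq_transpose_of_trivial] at this
    rw [hMt, Matrix.mul_assoc]
  · intro x hx
    rw [star_trivial]
    have hPx : P *ᵥ x ≠ 0 := by
      intro h
      have hPu : IsUnit P := (Matrix.isUnit_iff_isUnit_det P).mpr hP
      have hinj := Matrix.mulVec_injective_iff_isUnit.mpr hPu
      apply hx
      apply hinj
      rw [h, mulVec_zero]
    have hcalc : x ⬝ᵥ ((Pᵀ * M * P) *ᵥ x) = (P *ᵥ x) ⬝ᵥ (M *ᵥ (P *ᵥ x)) := by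
      rw [← mulVec_mulVec, ← mulVec_mulVec, Matrix.dotProduct_mulVec, Matrix.vecMul_transpose]
    rw [hcalc]
    have := hM.dotProduct_mulVec_pos hPx
    rwa [star_trivial] at this

lemma map_mul_cast (M N : Matrix (Fin n) (Fin n) ℤ) :
    ((M * N).map fun x : ℤ => (x : ℝ)) =
      (M.map fun x : ℤ => (x : ℝ)) * (N.map fun x : ℤ => (x : ℝ)) := by
  ext i j
  simp only [Matrix.map_apply, Matrix.mul_apply]
  push_cast
  rfl

lemma map_det_cast (M : Matrix (Fin n) (Fin n) ℤ) :
    (M.map fun x : ℤ => (x : ℝ)).det = ((M.det : ℤ) : ℝ) := by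
  have h : M.map (fun x : ℤ => (x : ℝ)) = M.map ⇑(Int.castRingHom ℝ) := by
    rw [Int.coe_castRingHom]
  rw [h]
  exact (RingHom.map_det (Int.castRingHom ℝ) M).symm

end Algorithm

end St11Aux

/-- A quasi-Cartan matrix `A` with symmetrizer `d` is positive iff it is
equivalent to a positive generalized Cartan matrix: there are a quasi-Cartan matrix `A⁰` with
non-positive off-diagonal entries, symmetrized by the same `d` with `DA⁰` positive definite,
and an integer matrix `E` of determinant `±1` with `DA = Eᵀ (DA⁰) E`. -/
theorem statement11 {n : ℕ} (A : Matrix (Fin n) (Fin n) ℤ) (hdiag : ∀ i, A i i = 2)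
    (d : Fin n → ℤ) (hd : ∀ i, 0 < d i) (hsym : ∀ i j, d i * A i j = d j * A j i) :
    Matrix.PosDef (Matrix.of fun i j => ((d i * A i j : ℤ) : ℝ)) ↔
      ∃ (A0 E : Matrix (Fin n) (Fin n) ℤ),
        (∀ i, A0 i i = 2) ∧ (∀ i j, i ≠ j → A0 i j ≤ 0) ∧
        (∀ i j, d i * A0 i j = d j * A0 j i) ∧
        Matrix.PosDef (Matrix.of fun i j => ((d i * A0 i j : ℤ) : ℝ)) ∧
        (E.det = 1 ∨ E.det = -1) ∧
        (Matrix.of fun i j => d i * A i j) =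
          E.transpose * (Matrix.of fun i j => d i * A0 i j) * E := by
  classical
  constructor
  · -- forward direction
    intro h
    set C : Matrix (Fin n) (Fin n) ℤ := Matrix.of fun i j => d i * A i j with hCdef
    have hCpos : (C.map fun x : ℤ => (x : ℝ)).PosDef := h
    have hsymC : Cᵀ = C := by
      ext i j
      show d j * A j i = d i * A i j
      rw [hsym]
    have hdiagC : ∀ j, C j j = 2 * d j := by
      intro j
      show d j * A j j = 2 * d j
      rw [hdiag]
      ring
    have hdvdC : ∀ i j, d i ∣ C i j := fun i j => ⟨A i j, rfl⟩
    obtain ⟨F, hF, hdetF, hnonpos⟩ := St11Aux.forward_main hsymC hCpos hd hdiagC hdvdC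
    have hu : IsUnit F.det := Int.isUnit_iff.mpr hdetF
    set A0 : Matrix (Fin n) (Fin n) ℤ :=
      Matrix.of fun i j => St11Aux.bil C (St11Aux.col F i) (St11Aux.col F j) / d i with hA0def
    have hA0 : ∀ i j, d i * A0 i j = St11Aux.bil C (St11Aux.col F i) (St11Aux.col F j) :=
      fun i j => Int.mul_ediv_cancel' (hF.dvd i j)
    have hGram : (Matrix.of fun i j => d i * A0 i j) = Fᵀ * C * F := by
      ext i j
      show d i * A0 i j = (Fᵀ * C * F) i j
      rw [hA0 i j, St11Aux.gram_eq]
    refine ⟨A0, F⁻¹, ?_, ?_, ?_, ?_, ?_, ?_⟩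
    · -- diagonal
      intro i
      have h1 := hA0 i i
      rw [hF.norm i] at h1
      have h2 : d i * A0 i i = d i * 2 := by rw [h1]; ring
      exact mul_left_cancel₀ (hd i).ne' h2
    · -- off-diagonal nonpositive
      intro i j hij
      have h1 := hA0 i j
      have h2 := hnonpos i j hij
      nlinarith [hd i]
    · -- symmetrizer
      intro i j
      rw [hA0 i j, hA0 j i, St11Aux.bil_comm hsymC]
    · -- positive definiteness
      show ((Matrix.of fun i j => d i * A0 i j).map fun x : ℤ => (x : ℝ)).PosDef
      rw [hGram, St11Aux.map_mul_cast, St11Aux.map_mul_cast, Matrix.transpose_map]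
      refine St11Aux.posdef_conj hCpos ?_
      rw [St11Aux.map_det_cast]
      refine isUnit_iff_ne_zero.mpr ?_
      rcases hdetF with h2 | h2 <;> rw [h2] <;> norm_num
    · -- determinant of E
      have h1 : F.det * (F⁻¹).det = 1 := by
        rw [← Matrix.det_mul, Matrix.mul_nonsing_inv F hu, Matrix.det_one]
      rcases hdetF with h2 | h2 <;> rw [h2] at h1
      · left; linarith
      · right; linarith
    · -- the congruence equation
      rw [hGram]
      have h2 : (F⁻¹)ᵀ * (Fᵀ * C * F) * F⁻¹ = (F * F⁻¹)ᵀ * C * (F * F⁻¹) := by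
        rw [Matrix.transpose_mul F (F⁻¹)]
        simp only [Matrix.mul_assoc]
      show C = F⁻¹ᵀ * (Fᵀ * C * F) * F⁻¹
      rw [h2, Matrix.mul_nonsing_inv F hu]
      simp
  · -- backward direction
    rintro ⟨A0, E, hA0diag, hA0off, hA0sym, hA0pos, hdetE, heq⟩
    have hA0pos' : ((Matrix.of fun i j => d i * A0 i j).map fun x : ℤ => (x : ℝ)).PosDef :=
      hA0pos
    show ((Matrix.of fun i j => d i * A i j).map fun x : ℤ => (x : ℝ)).PosDef
    rw [heq, St11Aux.map_mul_cast, St11Aux.map_mul_cast]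
    have ht : (Eᵀ.map fun x : ℤ => (x : ℝ)) = (E.map fun x : ℤ => (x : ℝ))ᵀ :=
      Matrix.transpose_map
    rw [show E.transpose = Eᵀ from rfl, ht]
    refine St11Aux.posdef_conj hA0pos' ?_
    rw [St11Aux.map_det_cast]
    refine isUnit_iff_ne_zero.mpr ?_
    rcases hdetE with h2 | h2 <;> rw [h2] <;> norm_num
end

section
/- Let B be an n×n skew-symmetrizable integer matrix with symmetrizer D, let k be an index, and let A be a quasi-Cartan companion of B that is k-compatible with B (then DA is automatically symmetric). Define the matrix A' by: A'_ii = 2 for all i; A'_ik = sgn(B_ik)·A_ik and A'_ki = sgn(B_ik)·A_ki for i ≠ k; and A'_ij = A_ij − sgn(A_ik·A_kj)·max(B_ik·B_kj, 0) for i ≠ k, j ≠ k, i ≠ j. Then: (1) A' is a quasi-Cartan companion of B' = μ_k(B); (2) A' is k-compatible with B'; and (3) there exists an integer matrix E with det(E) = ±1 such that DA' = Eᵀ (DA) E. -/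
open Matrix

/-- `A` is a `k`-compatible quasi-Cartan companion of `B`: whenever `B i k > 0` and
`B k j > 0`, one has `sgn(A i k * A k j * A j i) = sgn(B j i)`. -/
def KCompatible {n : ℕ} (B A : Matrix (Fin n) (Fin n) ℤ) (k : Fin n) : Prop :=
  ∀ i j, 0 < B i k → 0 < B k j → (A i k * A k j * A j i).sign = (B j i).sign

lemma signPM {x : ℤ} (h : x ≠ 0) : x.sign = 1 ∨ x.sign = -1 := by
  rcases lt_trichotomy x 0 with h'|h'|h'
  · right; exact Int.sign_eq_neg_one_iff_neg.mpr h'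
  · exact absurd h' h
  · left; exact Int.sign_eq_one_iff_pos.mpr h'

lemma intEqOfSignAbs {x y : ℤ} (h1 : x.sign = y.sign) (h2 : |x| = |y|) : x = y := by
  rcases abs_eq_abs.mp h2 with h | h
  · exact h
  · subst h
    rw [Int.sign_neg] at h1
    have hy : y.sign = 0 := by omega
    have := Int.sign_eq_zero_iff_zero.mp hy
    omega

lemma signPosMul {d x : ℤ} (hd : 0 < d) : (d * x).sign = x.sign := by
  rw [Int.sign_mul, Int.sign_eq_one_iff_pos.mpr hd, one_mul]

/-- Let `A` be a `k`-compatible quasi-Cartan companion of a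
skew-symmetrizable matrix `B` with symmetrizer `d`, and let `A'` be defined by the explicit
formulas of Proposition 3.2.  Then `A'` is a `k`-compatible quasi-Cartan companion of
`μ_k(B)`, and `D A' = Eᵀ (D A) E` for some integer matrix `E` of determinant `±1`. -/
theorem statement12 {n : ℕ} (B : Matrix (Fin n) (Fin n) ℤ)
    (d : Fin n → ℤ) (hd : ∀ i, 0 < d i)
    (hskew : ∀ i j, d i * B i j = -(d j * B j i))
    (k : Fin n) (A : Matrix (Fin n) (Fin n) ℤ)
    (hcomp : IsQuasiCartanCompanion B A) (hk : KCompatible B A k)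
    (A' : Matrix (Fin n) (Fin n) ℤ)
    (hA'diag : ∀ i, A' i i = 2)
    (hA'col : ∀ i, i ≠ k → A' i k = (B i k).sign * A i k)
    (hA'row : ∀ i, i ≠ k → A' k i = (B i k).sign * A k i)
    (hA'off : ∀ i j, i ≠ k → j ≠ k → i ≠ j →
      A' i j = A i j - (A i k * A k j).sign * max (B i k * B k j) 0) :
    IsQuasiCartanCompanion (mutate B k) A' ∧
    KCompatible (mutate B k) A' k ∧
    ∃ E : Matrix (Fin n) (Fin n) ℤ, (E.det = 1 ∨ E.det = -1) ∧
      (Matrix.of fun i j => d i * A' i j) =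
        E.transpose * (Matrix.of fun i j => d i * A i j) * E := by
  classical
  obtain ⟨⟨hAdiag, d', hd', hsymAd'⟩, habs⟩ := hcomp
  -- Basic facts
  have hBdiag : ∀ i, B i i = 0 := by
    intro i
    have h := hskew i i
    have h2 : d i * B i i = 0 := by linarith
    exact (mul_eq_zero.mp h2).resolve_left (hd i).ne'
  have hBsign : ∀ i j, (B i j).sign = -(B j i).sign := by
    intro i j
    have h1 : (d i * B i j).sign = (-(d j * B j i)).sign := by rw [hskew i j]
    rwa [signPosMul (hd i), Int.sign_neg, signPosMul (hd j)] at h1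
  have hBpos : ∀ i j, 0 < B i j → B j i < 0 := by
    intro i j h
    have h1 := hBsign i j
    rw [Int.sign_eq_one_iff_pos.mpr h] at h1
    exact Int.sign_eq_neg_one_iff_neg.mp (by omega)
  have hBneg : ∀ i j, B i j < 0 → 0 < B j i := by
    intro i j h
    have h1 := hBsign i j
    rw [Int.sign_eq_neg_one_iff_neg.mpr h] at h1
    exact Int.sign_eq_one_iff_pos.mp (by omega)
  have hBzero : ∀ i j, B i j = 0 → B j i = 0 := by
    intro i j h
    have h1 := hBsign i j
    rw [h, Int.sign_zero] at h1
    exact Int.sign_eq_zero_iff_zero.mp (by omega)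
  have hA0 : ∀ i j, i ≠ j → B i j = 0 → A i j = 0 := by
    intro i j hij hb
    have h := habs i j hij
    rw [hb, abs_zero] at h
    exact abs_eq_zero.mp h
  have hAne : ∀ i j, i ≠ j → B i j ≠ 0 → A i j ≠ 0 := by
    intro i j hij hb h0
    have h := habs i j hij
    rw [h0, abs_zero] at h
    exact hb (abs_eq_zero.mp h.symm)
  have hAsign : ∀ i j, (A i j).sign = (A j i).sign := by
    intro i j
    have h1 : (d' i * A i j).sign = (d' j * A j i).sign := by rw [hsymAd' i j]
    rwa [signPosMul (hd' i), signPosMul (hd' j)] at h1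
  have hsymA : ∀ i j, d i * A i j = d j * A j i := by
    intro i j
    by_cases hij : i = j
    · subst hij; rfl
    · apply intEqOfSignAbs
      · rw [signPosMul (hd i), signPosMul (hd j)]; exact hAsign i j
      · rw [abs_mul, abs_mul, abs_of_pos (hd i), abs_of_pos (hd j),
          habs i j hij, habs j i (Ne.symm hij)]
        have h : |d i * B i j| = |d j * B j i| := by rw [hskew i j, abs_neg]
        rwa [abs_mul, abs_mul, abs_of_pos (hd i), abs_of_pos (hd j)] at h
  have hcorr : ∀ i j, i ≠ k → j ≠ k →
      (A i k * A k j).sign * max (B i k * B k j) 0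
        = if 0 < B i k * B k j then A i k * A k j else 0 := by
    intro i j hik hjk
    by_cases hp : 0 < B i k * B k j
    · rw [if_pos hp, max_eq_left hp.le]
      have h1 : |A i k * A k j| = B i k * B k j := by
        rw [abs_mul, habs i k hik, habs k j (Ne.symm hjk), ← abs_mul, abs_of_pos hp]
      rw [← h1, Int.sign_mul_abs]
    · rw [if_neg hp, max_eq_right (not_lt.mp hp), mul_zero]
  have hprodEq : ∀ i j, i ≠ k → j ≠ k → 0 < B i k * B k j →
      A i k * A k j = (A i k * A k j).sign * (B i k * B k j) := by
    intro i j hik hjk hp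
    conv_lhs => rw [← Int.sign_mul_abs (A i k * A k j)]
    rw [abs_mul, habs i k hik, habs k j (Ne.symm hjk), ← abs_mul, abs_of_pos hp]
  have keyA : ∀ i j, i ≠ k → j ≠ k → i ≠ j → 0 < B i k → 0 < B k j →
      A j i = (A i k * A k j).sign * B j i ∧
      A i j = -(A i k * A k j).sign * B i j := by
    intro i j hik hjk hij h1 h2
    have hAik : A i k ≠ 0 := hAne i k hik h1.ne'
    have hAkj : A k j ≠ 0 := hAne k j (Ne.symm hjk) h2.ne'
    have hs := signPM (mul_ne_zero hAik hAkj)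
    have hkk := hk i j h1 h2
    rw [Int.sign_mul] at hkk
    have hss : ((A i k * A k j).sign).sign = (A i k * A k j).sign := by
      rcases hs with h|h <;> rw [h] <;> decide
    have habs1 : |(A i k * A k j).sign| = 1 := by
      rcases hs with h|h <;> rw [h] <;> decide
    have e1 := hAsign i j
    have e2 := hBsign j i
    constructor
    · apply intEqOfSignAbs
      · rw [Int.sign_mul, hss]
        rcases hs with h|h <;> rw [h] at hkk ⊢ <;> omega
      · rw [abs_mul, habs1, one_mul]; exact habs j i (Ne.symm hij)
    · apply intEqOfSignAbs
      · rw [Int.sign_mul, Int.sign_neg, hss]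
        rcases hs with h|h <;> rw [h] at hkk ⊢ <;> omega
      · rw [abs_mul, abs_neg, habs1, one_mul]; exact habs i j hij
  refine ⟨⟨⟨hA'diag, d, hd, ?_⟩, ?_⟩, ?_, ?_⟩
  · -- symmetrizability of A'
    intro i j
    by_cases hij : i = j
    · subst hij; rfl
    by_cases hik : i = k
    · obtain rfl := hik.symm
      have hjk : j ≠ k := Ne.symm hij
      rw [hA'row j hjk, hA'col j hjk]
      linear_combination (B j k).sign * hsymA k j
    by_cases hjk : j = k
    · obtain rfl := hjk.symm
      rw [hA'col i hik, hA'row i hik]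
      linear_combination (B i k).sign * hsymA i k
    · rw [hA'off i j hik hjk hij, hA'off j i hjk hik (Ne.symm hij),
        hcorr i j hik hjk, hcorr j i hjk hik]
      have hiff : (0 < B i k * B k j) ↔ (0 < B j k * B k i) := by
        have e : d i * (B i k * B k j) = d j * (B j k * B k i) := by
          linear_combination B k j * hskew i k - B k i * hskew j k
        constructor <;> intro h
        · nlinarith [hd i, hd j]
        · nlinarith [hd i, hd j]
      by_cases hp : 0 < B i k * B k j
      · rw [if_pos hp, if_pos (hiff.mp hp)]
        linear_combination hsymA i j - A k j * hsymA i k + A k i * hsymA j k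
      · rw [if_neg hp, if_neg (fun h => hp (hiff.mpr h))]
        simpa using hsymA i j
  · -- companion condition
    intro i j hij
    simp only [mutate, Matrix.of_apply]
    by_cases hik : i = k
    · obtain rfl := hik.symm
      rw [if_pos (Or.inl rfl), hA'row j (Ne.symm hij), abs_mul, abs_neg]
      by_cases hb : B j k = 0
      · have hbkj : B k j = 0 := hBzero j k hb
        rw [hb, hA0 k j hij hbkj, hbkj]
        simp
      · have h1 : |(B j k).sign| = 1 := by rcases signPM hb with h|h <;> rw [h] <;> decide
        rw [h1, one_mul]; exact habs k j hij
    by_cases hjk : j = k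
    · obtain rfl := hjk.symm
      rw [if_pos (Or.inr rfl), hA'col i hik, abs_mul, abs_neg]
      by_cases hb : B i k = 0
      · rw [hb, hA0 i k hij hb]
        simp
      · have h1 : |(B i k).sign| = 1 := by rcases signPM hb with h|h <;> rw [h] <;> decide
        rw [h1, one_mul]; exact habs i k hij
    · rw [if_neg (not_or.mpr ⟨hik, hjk⟩), hA'off i j hik hjk hij, hcorr i j hik hjk]
      by_cases hp : 0 < B i k * B k j
      · rw [if_pos hp, max_eq_left hp.le, hprodEq i j hik hjk hp]
        rcases mul_pos_iff.mp hp with ⟨h1, h2⟩ | ⟨h1, h2⟩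
        · obtain ⟨_, hijEq⟩ := keyA i j hik hjk hij h1 h2
          rw [hijEq, Int.sign_eq_one_iff_pos.mpr h1]
          have hAik : A i k ≠ 0 := hAne i k hik h1.ne'
          have hAkj : A k j ≠ 0 := hAne k j (Ne.symm hjk) h2.ne'
          apply abs_eq_abs.mpr
          rcases signPM (mul_ne_zero hAik hAkj) with h|h
          · right; rw [h]; ring
          · left; rw [h]; ring
        · have hbki : 0 < B k i := hBneg i k h1
          have hbjk : 0 < B j k := hBneg k j h2
          obtain ⟨hijEq, _⟩ := keyA j i hjk hik (Ne.symm hij) hbjk hbki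
          have hsEq : (A j k * A k i).sign = (A i k * A k j).sign := by
            rw [Int.sign_mul, Int.sign_mul, hAsign j k, hAsign k i, mul_comm]
          rw [hijEq, hsEq, Int.sign_eq_neg_one_iff_neg.mpr h1]
          have hAik : A i k ≠ 0 := hAne i k hik h1.ne
          have hAkj : A k j ≠ 0 := hAne k j (Ne.symm hjk) h2.ne
          apply abs_eq_abs.mpr
          rcases signPM (mul_ne_zero hAik hAkj) with h|h
          · left; rw [h]; ring
          · right; rw [h]; ring
      · rw [if_neg hp, sub_zero, max_eq_right (not_lt.mp hp), mul_zero, add_zero]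
        exact habs i j hij
  · -- k-compatibility of A' with mutate B k
    intro i j hi hj
    have hi' : 0 < -B i k := by simpa [mutate] using hi
    have hj' : 0 < -B k j := by simpa [mutate] using hj
    have h1 : B i k < 0 := by linarith
    have h2 : B k j < 0 := by linarith
    have hik : i ≠ k := by
      intro h; subst h; rw [hBdiag] at h1; exact absurd h1 (lt_irrefl 0)
    have hjk : j ≠ k := by
      intro h; subst h; rw [hBdiag] at h2; exact absurd h2 (lt_irrefl 0)
    have hbki : 0 < B k i := hBneg i k h1
    have hbjk : 0 < B j k := hBneg k j h2
    have hij : i ≠ j := by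
      intro h; subst h; linarith
    have hpji : 0 < B j k * B k i := mul_pos hbjk hbki
    have hmut : mutate B k j i = B j i + B j k * B k i := by
      simp only [mutate, Matrix.of_apply]
      rw [if_neg (not_or.mpr ⟨hjk, hik⟩), Int.sign_eq_one_iff_pos.mpr hbjk, one_mul,
        max_eq_left hpji.le]
    obtain ⟨_, hji⟩ := keyA j i hjk hik (Ne.symm hij) hbjk hbki
    have hpe := hprodEq j i hjk hik hpji
    have hAjk : A j k ≠ 0 := hAne j k hjk hbjk.ne'
    have hAki : A k i ≠ 0 := hAne k i (Ne.symm hik) hbki.ne'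
    have hs' := signPM (mul_ne_zero hAjk hAki)
    have hEq : (A i k * A k j).sign = (A j k * A k i).sign := by
      rw [Int.sign_mul, Int.sign_mul, hAsign i k, hAsign k j, mul_comm]
    rw [hmut, hA'col i hik, hA'row j hjk, hA'off j i hjk hik (Ne.symm hij), hcorr j i hjk hik,
      if_pos hpji, Int.sign_eq_neg_one_iff_neg.mpr h1, Int.sign_eq_one_iff_pos.mpr hbjk]
    set s2 := (A j k * A k i).sign with hs2
    rw [hji, hpe]
    have hfact : -1 * A i k * (1 * A k j) * (-s2 * B j i - s2 * (B j k * B k i))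
        = (s2 * (A i k * A k j)) * (B j i + B j k * B k i) := by ring
    rw [hfact, Int.sign_mul]
    have hone : (s2 * (A i k * A k j)).sign = 1 := by
      rw [Int.sign_mul, hEq]
      rcases hs' with h|h <;> rw [h] <;> decide
    rw [hone, one_mul]
  · -- the matrix E
    set w : Fin n → ℤ := fun j => if 0 < B k j then -A k j else 0 with hw
    have hwk : w k = 0 := by simp [hw, hBdiag k]
    set S : Matrix (Fin n) (Fin n) ℤ := Matrix.of fun i j => d i * A i j with hS
    set E : Matrix (Fin n) (Fin n) ℤ :=
      Matrix.of fun a b => (if a = b then (1:ℤ) else 0) + (if a = k then w b else 0) with hE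
    set F : Matrix (Fin n) (Fin n) ℤ :=
      Matrix.of fun a b => (if a = b then (1:ℤ) else 0) - (if a = k then w b else 0) with hF
    have hEF : E * F = 1 := by
      ext a b
      rw [Matrix.mul_apply]
      simp only [hE, hF, Matrix.of_apply, add_mul, mul_sub, mul_ite, ite_mul, one_mul, mul_one,
        zero_mul, mul_zero, Finset.sum_sub_distrib, Finset.sum_add_distrib, Finset.sum_ite_eq,
        Finset.sum_ite_eq', Finset.mem_univ, if_true]
      rw [Matrix.one_apply]
      by_cases hab : a = b <;> by_cases hak : a = k <;>
        simp [hab, hak, hwk, Ne.symm]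
    have hentry : ∀ i j, (E.transpose * S * E) i j
        = S i j + w i * S k j + (S i k + w i * S k k) * w j := by
      intro i j
      have h1 : ∀ b, (E.transpose * S) i b = S i b + w i * S k b := by
        intro b
        rw [Matrix.mul_apply]
        simp only [Matrix.transpose_apply, hE, Matrix.of_apply, add_mul, ite_mul, one_mul,
          zero_mul, Finset.sum_add_distrib, Finset.sum_ite_eq, Finset.sum_ite_eq',
          Finset.mem_univ, if_true]
      rw [Matrix.mul_apply]
      simp only [h1]
      simp only [h1, hE, Matrix.of_apply, mul_add, mul_ite, mul_one, mul_zero,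
        Finset.sum_add_distrib, Finset.sum_ite_eq, Finset.sum_ite_eq', Finset.mem_univ, if_true]
    refine ⟨E, ?_, ?_⟩
    · have hdet : E.det * F.det = 1 := by rw [← Matrix.det_mul, hEF, Matrix.det_one]
      exact Int.isUnit_iff.mp (IsUnit.of_mul_eq_one _ hdet)
    · ext i j
      rw [Matrix.of_apply, hentry i j]
      simp only [hS, Matrix.of_apply]
      by_cases hik : i = k <;> by_cases hjk : j = k
      · obtain rfl := hik.symm; obtain rfl := hjk.symm
        rw [hwk, hA'diag, hAdiag]; ring
      · obtain rfl := hik.symm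
        rw [hwk, hA'row j hjk, hAdiag k]
        by_cases hb : 0 < B k j
        · have hwj : w j = -A k j := by simp [hw, hb]
          rw [hwj, Int.sign_eq_neg_one_iff_neg.mpr (hBpos k j hb)]; ring
        · have hwj : w j = 0 := by simp [hw, hb]
          rw [hwj]
          rcases lt_trichotomy (B k j) 0 with h0|h0|h0
          · rw [Int.sign_eq_one_iff_pos.mpr (hBneg k j h0)]; ring
          · rw [hBzero k j h0, Int.sign_zero, hA0 k j (Ne.symm hjk) h0]; ring
          · exact absurd h0 hb
      · obtain rfl := hjk.symm
        rw [hwk, hA'col i hik, hAdiag k]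
        by_cases hb : 0 < B k i
        · have hwi : w i = -A k i := by simp [hw, hb]
          rw [hwi, Int.sign_eq_neg_one_iff_neg.mpr (hBpos k i hb)]
          linear_combination (-2 : ℤ) * hsymA i k
        · have hwi : w i = 0 := by simp [hw, hb]
          rw [hwi]
          rcases lt_trichotomy (B k i) 0 with h0|h0|h0
          · rw [Int.sign_eq_one_iff_pos.mpr (hBneg k i h0)]; ring
          · rw [hBzero k i h0, Int.sign_zero, hA0 i k hik (hBzero k i h0)]; ring
          · exact absurd h0 hb
      · by_cases hij : i = j
        · subst hij
          rw [hA'diag i, hAdiag i, hAdiag k]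
          by_cases hb : 0 < B k i
          · have hwi : w i = -A k i := by simp [hw, hb]
            rw [hwi]
            linear_combination (A k i) * hsymA i k
          · have hwi : w i = 0 := by simp [hw, hb]
            rw [hwi]; ring
        · rw [hA'off i j hik hjk hij, hcorr i j hik hjk, hAdiag k]
          by_cases hbi : 0 < B k i <;> by_cases hbj : 0 < B k j
          · have hwi : w i = -A k i := by simp [hw, hbi]
            have hwj : w j = -A k j := by simp [hw, hbj]
            have hBik : B i k < 0 := hBpos k i hbi
            have hnp : ¬ 0 < B i k * B k j :=
              not_lt.mpr (mul_nonpos_of_nonpos_of_nonneg hBik.le hbj.le)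
            rw [if_neg hnp, hwi, hwj]
            linear_combination (A k j) * hsymA i k
          · have hwi : w i = -A k i := by simp [hw, hbi]
            have hwj : w j = 0 := by simp [hw, hbj]
            have hBik : B i k < 0 := hBpos k i hbi
            rcases lt_trichotomy (B k j) 0 with h0|h0|h0
            · have hp : 0 < B i k * B k j := mul_pos_of_neg_of_neg hBik h0
              rw [if_pos hp, hwi, hwj]
              linear_combination (-(A k j)) * hsymA i k
            · have hnp : ¬ 0 < B i k * B k j := by rw [h0, mul_zero]; exact lt_irrefl 0
              rw [if_neg hnp, hwi, hwj, hA0 k j (Ne.symm hjk) h0]; ring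
            · exact absurd h0 hbj
          · have hwi : w i = 0 := by simp [hw, hbi]
            have hwj : w j = -A k j := by simp [hw, hbj]
            rcases lt_trichotomy (B k i) 0 with h0|h0|h0
            · have hp : 0 < B i k * B k j := mul_pos (hBneg k i h0) hbj
              rw [if_pos hp, hwi, hwj]; ring
            · have hnp : ¬ 0 < B i k * B k j := by
                rw [hBzero k i h0, zero_mul]; exact lt_irrefl 0
              rw [if_neg hnp, hwi, hwj, hA0 i k hik (hBzero k i h0)]; ring
            · exact absurd h0 hbi
          · have hwi : w i = 0 := by simp [hw, hbi]
            have hwj : w j = 0 := by simp [hw, hbj]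
            have h1 : 0 ≤ B i k := by
              rcases lt_trichotomy (B k i) 0 with h|h|h
              · exact (hBneg k i h).le
              · rw [hBzero k i h]
              · exact absurd h hbi
            have h2 : B k j ≤ 0 := not_lt.mp hbj
            have hnp : ¬ 0 < B i k * B k j :=
              not_lt.mpr (mul_nonpos_of_nonneg_of_nonpos h1 h2)
            rw [if_neg hnp, hwi, hwj]; ring
end

section
/- Let B be an n×n skew-symmetrizable integer matrix such that every chordless cycle in Γ(B) is cyclically oriented, and suppose B has a positive quasi-Cartan companion. Then for every index k, the matrix μ_k(B) has a positive quasi-Cartan companion. -/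
open Matrix

lemma sum3_left {n : ℕ} {i j k : Fin n} (hij : i ≠ j) (hik : i ≠ k) (hjk : j ≠ k)
    (X Y Z : ℝ) (g : Fin n → ℝ) :
    (∑ a, (if a = i then X else if a = j then Y else if a = k then Z else 0) * g a)
      = X * g i + Y * g j + Z * g k := by
  have h : ∀ a : Fin n,
      (if a = i then X else if a = j then Y else if a = k then Z else 0) * g a
        = (if a = i then X * g i else 0) + ((if a = j then Y * g j else 0)
          + (if a = k then Z * g k else 0)) := by
    intro a
    by_cases h1 : a = i
    · subst h1; simp [hij, hik]
    · by_cases h2 : a = j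
      · subst h2; simp [h1, hjk]
      · by_cases h3 : a = k
        · subst h3; simp [h1, h2]
        · simp [h1, h2, h3]
  rw [Finset.sum_congr rfl (fun a _ => h a)]
  simp [Finset.sum_add_distrib, Finset.sum_ite_eq']
  ring

lemma sum3_right {n : ℕ} {i j k : Fin n} (hij : i ≠ j) (hik : i ≠ k) (hjk : j ≠ k)
    (X Y Z : ℝ) (g : Fin n → ℝ) :
    (∑ a, g a * (if a = i then X else if a = j then Y else if a = k then Z else 0))
      = g i * X + g j * Y + g k * Z := by
  have := sum3_left hij hik hjk X Y Z g
  calc (∑ a, g a * (if a = i then X else if a = j then Y else if a = k then Z else 0))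
      = ∑ a, (if a = i then X else if a = j then Y else if a = k then Z else 0) * g a := by
        refine Finset.sum_congr rfl fun a _ => mul_comm _ _
    _ = X * g i + Y * g j + Z * g k := this
    _ = g i * X + g j * Y + g k * Z := by ring

lemma abs_sub_of_mul_pos {x y : ℤ} (h : 0 < x * y) : |x - y| = abs (|x| - |y|) := by
  rcases lt_trichotomy x 0 with hx | hx | hx
  · have hy : y < 0 := by nlinarith
    rw [abs_of_neg hx, abs_of_neg hy, show (-x - -y) = -(x - y) by ring, abs_neg]
  · simp [hx] at h
  · have hy : 0 < y := by nlinarith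
    rw [abs_of_pos hx, abs_of_pos hy]


set_option maxHeartbeats 1000000 in
lemma tri_sign {n : ℕ} (A : Matrix (Fin n) (Fin n) ℤ) (d : Fin n → ℤ) (hd : ∀ i, 0 < d i)
    (hsym : ∀ i j, d i * A i j = d j * A j i)
    (hPD : Matrix.PosDef (Matrix.of fun i j => ((d i * A i j : ℤ) : ℝ)))
    (hdiag : ∀ i, A i i = 2) {i j k : Fin n} (hij : i ≠ j) (hik : i ≠ k) (hjk : j ≠ k)
    (h1 : A i j ≠ 0) (h2 : A j k ≠ 0) (h3 : A k i ≠ 0) :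
    0 < A i j * A j k * A k i := by
  by_contra hcon
  push_neg at hcon
  have hprod : A i j * A j k * A k i < 0 :=
    lt_of_le_of_ne hcon (mul_ne_zero (mul_ne_zero h1 h2) h3)
  have hpair : ∀ a b : Fin n, A a b ≠ 0 → 1 ≤ A a b * A b a := by
    intro a b hab
    have h := hsym a b
    have hba : A b a ≠ 0 := by
      intro h0; rw [h0, mul_zero] at h
      exact hab (by
        rcases mul_eq_zero.mp h with h' | h'
        · exact absurd h' (hd a).ne'
        · exact h')
    have hpos : 0 < d a * (A a b * A b a) := by
      have heq : d a * (A a b * A b a) = d b * (A b a)^2 := by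
        linear_combination (A b a) * h
      rw [heq]
      have : (A b a)^2 > 0 := by positivity
      exact mul_pos (hd b) this
    have hX : 0 < A a b * A b a := by nlinarith [hd a]
    omega
  -- sign choices
  have he1 : ∃ e1 : ℤ, e1 * e1 = 1 ∧ e1 * A i j < 0 := by
    by_cases h : 0 < A i j
    · exact ⟨-1, by norm_num, by linarith⟩
    · push_neg at h
      exact ⟨1, by norm_num, by have := lt_of_le_of_ne h h1; linarith⟩
  obtain ⟨e1, he1sq, t1⟩ := he1
  have he1ne : e1 ≠ 0 := by intro h0; rw [h0] at he1sq; norm_num at he1sq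
  have he2 : ∃ e2 : ℤ, e2 * e2 = 1 ∧ e2 * (e1 * A j k) < 0 := by
    by_cases h : 0 < e1 * A j k
    · exact ⟨-1, by norm_num, by linarith⟩
    · push_neg at h
      have hne2 : e1 * A j k ≠ 0 := mul_ne_zero he1ne h2
      exact ⟨1, by norm_num, by have := lt_of_le_of_ne h hne2; linarith⟩
  obtain ⟨e2, he2sq, t2⟩ := he2
  have t3 : e2 * A k i < 0 := by
    have hXYZ : (e1 * A i j) * (e2 * (e1 * A j k)) * (e2 * A k i)
        = A i j * A j k * A k i := by
      linear_combination (A i j * A j k * A k i * (e1*e1)) * he2sq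
        + (A i j * A j k * A k i) * he1sq
    nlinarith [mul_pos_of_neg_of_neg t1 t2]
  -- real setup
  set p : ℝ := Real.sqrt (d i) with hpdef
  set q : ℝ := Real.sqrt (d j) with hqdef
  set r : ℝ := Real.sqrt (d k) with hrdef
  have hp0 : 0 < p := Real.sqrt_pos.mpr (by exact_mod_cast hd i)
  have hq0 : 0 < q := Real.sqrt_pos.mpr (by exact_mod_cast hd j)
  have hr0 : 0 < r := Real.sqrt_pos.mpr (by exact_mod_cast hd k)
  have hp : p^2 = (d i : ℝ) := Real.sq_sqrt (by exact_mod_cast (hd i).le)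
  have hq : q^2 = (d j : ℝ) := Real.sq_sqrt (by exact_mod_cast (hd j).le)
  have hr : r^2 = (d k : ℝ) := Real.sq_sqrt (by exact_mod_cast (hd k).le)
  set E1 : ℝ := (e1 : ℝ) with hE1
  set E2 : ℝ := (e2 : ℝ) with hE2
  have hE1sq : E1^2 = 1 := by
    rw [hE1, show ((e1:ℝ))^2 = ((e1*e1 : ℤ) : ℝ) by push_cast; ring, he1sq]; norm_num
  have hE2sq : E2^2 = 1 := by
    rw [hE2, show ((e2:ℝ))^2 = ((e2*e2 : ℤ) : ℝ) by push_cast; ring, he2sq]; norm_num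
  set sij : ℝ := ((d i * A i j : ℤ) : ℝ) with hsij
  set sjk : ℝ := ((d j * A j k : ℤ) : ℝ) with hsjk
  set ski : ℝ := ((d k * A k i : ℤ) : ℝ) with hski
  -- bounds on symmetrized entries
  have b1 : E1 * sij ≤ -(p*q) := by
    have hlt : E1 * sij < 0 := by
      have : e1 * (d i * A i j) < 0 := by nlinarith [hd i]
      rw [hE1, hsij]; exact_mod_cast this
    have hint : d i * d j ≤ (d i * A i j) * (d i * A i j) := by
      have heq : (d i * A i j) * (d i * A i j) = (d i * d j) * (A i j * A j i) := by
        linear_combination (d i * A i j) * (hsym i j)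
      rw [heq]
      exact le_mul_of_one_le_right (mul_pos (hd i) (hd j)).le (hpair i j h1)
    have hsq : (p*q)^2 ≤ (E1 * sij)^2 := by
      have h' : (p*q)^2 = ((d i * d j : ℤ) : ℝ) := by push_cast; rw [mul_pow, hp, hq]
      have h'' : (E1 * sij)^2 = ((e1*e1 : ℤ):ℝ) * (((d i * A i j) * (d i * A i j) : ℤ) : ℝ) := by
        rw [hE1, hsij]; push_cast; ring
      rw [h', h'', he1sq]
      norm_num
      exact_mod_cast hint
    nlinarith [mul_pos hp0 hq0]
  have b2 : E1 * E2 * sjk ≤ -(q*r) := by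
    have hlt : E1 * E2 * sjk < 0 := by
      have : (e1 * e2) * (d j * A j k) < 0 := by nlinarith [hd j]
      rw [hE1, hE2, hsjk]; exact_mod_cast this
    have hint : d j * d k ≤ (d j * A j k) * (d j * A j k) := by
      have heq : (d j * A j k) * (d j * A j k) = (d j * d k) * (A j k * A k j) := by
        linear_combination (d j * A j k) * (hsym j k)
      rw [heq]
      exact le_mul_of_one_le_right (mul_pos (hd j) (hd k)).le (hpair j k h2)
    have hsq : (q*r)^2 ≤ (E1 * E2 * sjk)^2 := by
      have h' : (q*r)^2 = ((d j * d k : ℤ) : ℝ) := by push_cast; rw [mul_pow, hq, hr]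
      have h'' : (E1 * E2 * sjk)^2
          = ((e1*e1 : ℤ):ℝ) * ((e2*e2 : ℤ):ℝ) * (((d j * A j k) * (d j * A j k) : ℤ) : ℝ) := by
        rw [hE1, hE2, hsjk]; push_cast; ring
      rw [h', h'', he1sq, he2sq]
      norm_num
      exact_mod_cast hint
    nlinarith [mul_pos hq0 hr0]
  have b3 : E2 * ski ≤ -(r*p) := by
    have hlt : E2 * ski < 0 := by
      have : e2 * (d k * A k i) < 0 := by nlinarith [hd k]
      rw [hE2, hski]; exact_mod_cast this
    have hint : d k * d i ≤ (d k * A k i) * (d k * A k i) := by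
      have heq : (d k * A k i) * (d k * A k i) = (d k * d i) * (A k i * A i k) := by
        linear_combination (d k * A k i) * (hsym k i)
      rw [heq]
      exact le_mul_of_one_le_right (mul_pos (hd k) (hd i)).le (hpair k i h3)
    have hsq : (r*p)^2 ≤ (E2 * ski)^2 := by
      have h' : (r*p)^2 = ((d k * d i : ℤ) : ℝ) := by push_cast; rw [mul_pow, hr, hp]
      have h'' : (E2 * ski)^2 = ((e2*e2 : ℤ):ℝ) * (((d k * A k i) * (d k * A k i) : ℤ) : ℝ) := by
        rw [hE2, hski]; push_cast; ring
      rw [h', h'', he2sq]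
      norm_num
      exact_mod_cast hint
    nlinarith [mul_pos hr0 hp0]
  -- the test vector
  set M : Matrix (Fin n) (Fin n) ℝ := Matrix.of fun a b => ((d a * A a b : ℤ) : ℝ) with hM
  set x : Fin n → ℝ := fun a =>
    if a = i then q*r else if a = j then E1*(p*r) else if a = k then E2*(p*q) else 0 with hx
  have hxne : x ≠ 0 := by
    intro h0
    have h0' := congrFun h0 i
    rw [hx] at h0'
    simp only [if_pos rfl, Pi.zero_apply] at h0'
    rcases mul_eq_zero.mp h0' with h | h
    · exact hq0.ne' h
    · exact hr0.ne' h
  have hQpos := hPD.dotProduct_mulVec_pos hxne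
  have hstar : star x = x := funext fun a => star_trivial _
  rw [hstar] at hQpos
  -- compute the quadratic form
  have hmv : ∀ a : Fin n, (M *ᵥ x) a = M a i * (q*r) + M a j * (E1*(p*r)) + M a k * (E2*(p*q)) := by
    intro a
    show (∑ b, M a b * x b) = _
    rw [hx]
    exact sum3_right hij hik hjk _ _ _ (fun b => M a b)
  have hQ : dotProduct x (M *ᵥ x)
      = (q*r) * ((M *ᵥ x) i) + (E1*(p*r)) * ((M *ᵥ x) j) + (E2*(p*q)) * ((M *ᵥ x) k) := by
    show (∑ a, x a * (M *ᵥ x) a) = _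
    rw [hx]
    exact sum3_left hij hik hjk _ _ _ _
  -- entries of M
  have hMii : M i i = 2 * p^2 := by
    show ((d i * A i i : ℤ) : ℝ) = _; rw [hdiag i]; push_cast; rw [hp]; ring
  have hMjj : M j j = 2 * q^2 := by
    show ((d j * A j j : ℤ) : ℝ) = _; rw [hdiag j]; push_cast; rw [hq]; ring
  have hMkk : M k k = 2 * r^2 := by
    show ((d k * A k k : ℤ) : ℝ) = _; rw [hdiag k]; push_cast; rw [hr]; ring
  have hMij : M i j = sij := rfl
  have hMji : M j i = sij := by
    show ((d j * A j i : ℤ) : ℝ) = sij; rw [hsij, ← hsym i j]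
  have hMjk : M j k = sjk := rfl
  have hMkj : M k j = sjk := by
    show ((d k * A k j : ℤ) : ℝ) = sjk; rw [hsjk, ← hsym j k]
  have hMki : M k i = ski := rfl
  have hMik : M i k = ski := by
    show ((d i * A i k : ℤ) : ℝ) = ski; rw [hski, ← hsym k i]
  have hQeq : dotProduct x (M *ᵥ x)
      = 6*p^2*q^2*r^2 + 2*(p*q*r^2)*(E1*sij) + 2*(p^2*q*r)*(E1*E2*sjk)
        + 2*(p*q^2*r)*(E2*ski) := by
    rw [hQ, hmv i, hmv j, hmv k, hMii, hMjj, hMkk, hMij, hMji, hMjk, hMkj, hMki, hMik]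
    linear_combination (2*p^2*q^2*r^2) * hE1sq + (2*p^2*q^2*r^2) * hE2sq
  rw [hQeq] at hQpos
  have c1 : 2*(p*q*r^2)*(E1*sij) ≤ 2*(p*q*r^2)*(-(p*q)) :=
    mul_le_mul_of_nonneg_left b1 (by positivity)
  have c2 : 2*(p^2*q*r)*(E1*E2*sjk) ≤ 2*(p^2*q*r)*(-(q*r)) :=
    mul_le_mul_of_nonneg_left b2 (by positivity)
  have c3 : 2*(p*q^2*r)*(E2*ski) ≤ 2*(p*q^2*r)*(-(r*p)) :=
    mul_le_mul_of_nonneg_left b3 (by positivity)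
  have c1' : 2*(p*q*r^2)*(-(p*q)) = -(2*(p^2*q^2*r^2)) := by ring
  have c2' : 2*(p^2*q*r)*(-(q*r)) = -(2*(p^2*q^2*r^2)) := by ring
  have c3' : 2*(p*q^2*r)*(-(r*p)) = -(2*(p^2*q^2*r^2)) := by ring
  linarith [c1, c2, c3, c1', c2', c3']


lemma skew_pos {n : ℕ} {B : Matrix (Fin n) (Fin n) ℤ} {c : Fin n → ℤ} (hc : ∀ i, 0 < c i)
    (hskew : ∀ i j, c i * B i j = -(c j * B j i)) {x y : Fin n} (h : 0 < B x y) :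
    B y x < 0 := by
  have := hskew x y
  nlinarith [hc x, hc y]

lemma skew_ne {n : ℕ} {B : Matrix (Fin n) (Fin n) ℤ} {c : Fin n → ℤ} (hc : ∀ i, 0 < c i)
    (hskew : ∀ i j, c i * B i j = -(c j * B j i)) {x y : Fin n} (h : B x y ≠ 0) :
    B y x ≠ 0 := by
  intro h0
  apply h
  have := hskew x y
  rw [h0, mul_zero, neg_zero] at this
  exact (mul_eq_zero.mp this).resolve_left (hc x).ne'

lemma tri_orient {n : ℕ} {B : Matrix (Fin n) (Fin n) ℤ} {c : Fin n → ℤ} (hc : ∀ i, 0 < c i)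
    (hskew : ∀ i j, c i * B i j = -(c j * B j i))
    (hcyc : AllChordlessCyclesCyclicallyOriented B)
    {i j k : Fin n} (hij : i ≠ j) (hik : i ≠ k) (hjk : j ≠ k)
    (h1 : B i j ≠ 0) (h2 : B j k ≠ 0) (h3 : B k i ≠ 0) :
    (0 < B i j ∧ 0 < B j k ∧ 0 < B k i) ∨ (B i j < 0 ∧ B j k < 0 ∧ B k i < 0) := by
  have h1' : B j i ≠ 0 := skew_ne hc hskew h1
  have h2' : B k j ≠ 0 := skew_ne hc hskew h2
  have h3' : B i k ≠ 0 := skew_ne hc hskew h3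
  set z : ZMod 3 → Fin n := fun a => if a = 0 then i else if a = 1 then j else k with hz
  have hz0 : z 0 = i := by simp [hz]
  have hz1 : z 1 = j := by
    show (if (1:ZMod 3) = 0 then i else if (1:ZMod 3) = 1 then j else k) = j
    rw [if_neg (by decide : (1:ZMod 3) ≠ 0), if_pos rfl]
  have hz2 : z 2 = k := by
    show (if (2:ZMod 3) = 0 then i else if (2:ZMod 3) = 1 then j else k) = k
    rw [if_neg (by decide : (2:ZMod 3) ≠ 0), if_neg (by decide : (2:ZMod 3) ≠ 1)]
  have hall : ∀ a : ZMod 3, a = 0 ∨ a = 1 ∨ a = 2 := by decide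
  have hinjz : Function.Injective z := by
    intro a b hab
    rcases hall a with ha|ha|ha <;> rcases hall b with hb|hb|hb <;> subst ha <;> subst hb
    all_goals simp only [hz0, hz1, hz2] at hab
    all_goals first
      | rfl
      | exact absurd hab hij
      | exact absurd hab hik
      | exact absurd hab hjk
      | exact absurd hab.symm hij
      | exact absurd hab.symm hik
      | exact absurd hab.symm hjk
  have hconsec : ∀ a b : ZMod 3, a ≠ b → (b = a + 1 ∨ a = b + 1) := by decide
  have hedge : ∀ a b : ZMod 3, a ≠ b → (B (z a) (z b) ≠ 0 ↔ (b = a + 1 ∨ a = b + 1)) := by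
    intro a b hab
    refine ⟨fun _ => hconsec a b hab, fun _ => ?_⟩
    rcases hall a with ha|ha|ha <;> rcases hall b with hb|hb|hb <;> subst ha <;> subst hb <;>
      simp only [hz0, hz1, hz2] <;>
      first
        | exact absurd rfl hab
        | assumption
  obtain ⟨z', hrange, ⟨_, hinj', _⟩, hpo⟩ := hcyc 3 z ⟨le_refl 3, hinjz, hedge⟩
  have hmem : ∀ a : ZMod 3, z' a = i ∨ z' a = j ∨ z' a = k := by
    intro a
    have hmem' : z' a ∈ Set.range z := by rw [← hrange]; exact Set.mem_range_self a
    obtain ⟨b, hb⟩ := hmem'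
    rcases hall b with h|h|h <;> subst h
    · rw [hz0] at hb; exact Or.inl hb.symm
    · rw [hz1] at hb; exact Or.inr (Or.inl hb.symm)
    · rw [hz2] at hb; exact Or.inr (Or.inr hb.symm)
  have hne01 : z' 0 ≠ z' 1 := fun h => absurd (hinj' h) (by decide)
  have hne02 : z' 0 ≠ z' 2 := fun h => absurd (hinj' h) (by decide)
  have hne12 : z' 1 ≠ z' 2 := fun h => absurd (hinj' h) (by decide)
  have e01 : (0 : ZMod 3) + 1 = 1 := by decide
  have e12 : (1 : ZMod 3) + 1 = 2 := by decide
  have e20 : (2 : ZMod 3) + 1 = 0 := by decide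
  have hp0 : 0 < B (z' 0) (z' 1) := by have := hpo 0; rwa [e01] at this
  have hp1 : 0 < B (z' 1) (z' 2) := by have := hpo 1; rwa [e12] at this
  have hp2 : 0 < B (z' 2) (z' 0) := by have := hpo 2; rwa [e20] at this
  have sp : ∀ {x y : Fin n}, 0 < B x y → B y x < 0 := fun h => skew_pos hc hskew h
  rcases hmem 0 with h0|h0|h0 <;> rcases hmem 1 with hb1|hb1|hb1 <;>
      rcases hmem 2 with hb2|hb2|hb2 <;>
    rw [h0, hb1] at hp0 <;> rw [hb1, hb2] at hp1 <;> rw [hb2, h0] at hp2 <;>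
    first
      | exact absurd (h0.trans hb1.symm) hne01
      | exact absurd (h0.trans hb2.symm) hne02
      | exact absurd (hb1.trans hb2.symm) hne12
      | exact Or.inl ⟨hp0, hp1, hp2⟩
      | exact Or.inl ⟨hp2, hp0, hp1⟩
      | exact Or.inl ⟨hp1, hp2, hp0⟩
      | exact Or.inr ⟨sp hp2, sp hp1, sp hp0⟩
      | exact Or.inr ⟨sp hp0, sp hp2, sp hp1⟩
      | exact Or.inr ⟨sp hp1, sp hp0, sp hp2⟩


set_option maxHeartbeats 1000000 in
lemma posdef_congr {n : ℕ} {S : Matrix (Fin n) (Fin n) ℝ} (hS : S.PosDef)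
    (u : Fin n → ℝ) (k : Fin n) (huk : u k = 0) :
    ((1 + Matrix.of fun a b => if a = k then u b else 0)ᵀ * S
      * (1 + Matrix.of fun a b => if a = k then u b else 0)).PosDef := by
  set C : Matrix (Fin n) (Fin n) ℝ := Matrix.of fun a b => if a = k then u b else 0 with hC
  set E : Matrix (Fin n) (Fin n) ℝ := 1 + C with hE
  have hCC : C * C = 0 := by
    ext a b
    show (∑ c, C a c * C c b) = 0
    have : ∀ c, C a c * C c b = 0 := by
      intro c
      show (if a = k then u c else 0) * (if c = k then u b else 0) = 0
      by_cases h1 : a = k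
      · by_cases h2 : c = k
        · subst h2; rw [if_pos h1, if_pos rfl, huk, zero_mul]
        · rw [if_neg h2, mul_zero]
      · rw [if_neg h1, zero_mul]
    simp [this]
  have hinv : (1 - C) * E = 1 := by
    rw [hE, sub_mul, mul_add, mul_add, hCC]; simp
  have hinv' : E * (1 - C) = 1 := by
    rw [hE, add_mul, mul_sub, mul_sub, hCC]; simp
  have hET : Eᵀ = Eᴴ := (conjTranspose_eq_transpose_of_trivial E).symm
  refine Matrix.PosDef.of_dotProduct_mulVec_pos ?_ ?_
  · rw [hET]
    exact isHermitian_conjTranspose_mul_mul E hS.1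
  · intro x hx
    have hEx : E *ᵥ x ≠ 0 := by
      intro h0
      apply hx
      have h2 := Matrix.mulVec_mulVec x (1 - C) E
      rw [hinv, one_mulVec, h0, mulVec_zero] at h2
      exact h2.symm
    have := hS.dotProduct_mulVec_pos hEx
    rw [hET]
    simpa only [star_mulVec, dotProduct_mulVec, vecMul_vecMul] using this

lemma congr_entry {n : ℕ} (S : Matrix (Fin n) (Fin n) ℝ) (u : Fin n → ℝ) (k i j : Fin n) :
    (((1 + Matrix.of fun a b => if a = k then u b else 0)ᵀ * S
      * (1 + Matrix.of fun a b => if a = k then u b else 0) : Matrix (Fin n) (Fin n) ℝ)) i j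
    = S i j + u i * S k j + S i k * u j + u i * (S k k * u j) := by
  set C : Matrix (Fin n) (Fin n) ℝ := Matrix.of fun a b => if a = k then u b else 0 with hC
  have hCT : ∀ (X : Matrix (Fin n) (Fin n) ℝ) (a b : Fin n), (Cᵀ * X) a b = u a * X k b := by
    intro X a b
    rw [Matrix.mul_apply]
    have : ∀ c, Cᵀ a c * X c b = if c = k then u a * X c b else 0 := by
      intro c
      show (if c = k then u a else 0) * X c b = _
      split <;> simp
    rw [Finset.sum_congr rfl fun c _ => this c]
    simp [Finset.sum_ite_eq']
  have hSC : ∀ (X : Matrix (Fin n) (Fin n) ℝ) (a b : Fin n), (X * C) a b = X a k * u b := by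
    intro X a b
    rw [Matrix.mul_apply]
    have : ∀ c, X a c * C c b = if c = k then X a c * u b else 0 := by
      intro c
      show X a c * (if c = k then u b else 0) = _
      split <;> simp
    rw [Finset.sum_congr rfl fun c _ => this c]
    simp [Finset.sum_ite_eq']
  have hexp : (1 + C)ᵀ * S * (1 + C) = S + Cᵀ * S + S * C + Cᵀ * (S * C) := by
    rw [transpose_add, transpose_one]
    noncomm_ring
  rw [hexp]
  simp only [Matrix.add_apply, hCT, hSC]

set_option maxHeartbeats 1600000 in
/-- If every chordless cycle in `Γ(B)` is cyclically oriented and `B` has a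
positive quasi-Cartan companion, then `μ_k(B)` has a positive quasi-Cartan companion for
every `k`. -/
theorem statement13 {n : ℕ} (B : Matrix (Fin n) (Fin n) ℤ) (hB : IsSkewSymmetrizable B)
    (hcyc : AllChordlessCyclesCyclicallyOriented B)
    (hpos : ∃ A : Matrix (Fin n) (Fin n) ℤ,
      IsQuasiCartanCompanion B A ∧ IsPositiveQuasiCartan A) :
    ∀ k : Fin n, ∃ A' : Matrix (Fin n) (Fin n) ℤ,
      IsQuasiCartanCompanion (mutate B k) A' ∧ IsPositiveQuasiCartan A' := by
  intro k
  obtain ⟨A, ⟨⟨_, _⟩, habs⟩, hdiagA, d, hd, hsymd, hPD⟩ := hpos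
  obtain ⟨c, hc, hskew⟩ := hB
  have hBkk : B k k = 0 := by have := hskew k k; nlinarith [hc k]
  have hA0 : ∀ {a b : Fin n}, a ≠ b → B a b = 0 → A a b = 0 := by
    intro a b hab h0
    have := habs a b hab; rw [h0, abs_zero] at this; exact abs_eq_zero.mp this
  have hAne0 : ∀ {a b : Fin n}, a ≠ b → B a b ≠ 0 → A a b ≠ 0 := by
    intro a b hab h0 hA0'
    apply h0
    have := habs a b hab; rw [hA0', abs_zero] at this
    exact abs_eq_zero.mp this.symm
  have hpairA : ∀ a b : Fin n, A a b ≠ 0 → 0 < A a b * A b a := by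
    intro a b hab
    have h := hsymd a b
    have hba : A b a ≠ 0 := by
      intro h0; rw [h0, mul_zero] at h
      exact hab ((mul_eq_zero.mp h).resolve_left (hd a).ne')
    have hpos' : 0 < d a * (A a b * A b a) := by
      have heq : d a * (A a b * A b a) = d b * (A b a)^2 := by
        linear_combination (A b a) * h
      rw [heq]
      exact mul_pos (hd b) (by positivity)
    nlinarith [hd a]
  have hkneg : ∀ {x y : Fin n}, 0 < B x y → B y x < 0 := fun h => skew_pos hc hskew h
  have hkne : ∀ {x y : Fin n}, B x y ≠ 0 → B y x ≠ 0 := fun h => skew_ne hc hskew h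
  have hknn : ∀ {x y : Fin n}, B x y ≤ 0 → 0 ≤ B y x := by
    intro x y h
    nlinarith [hskew x y, hc x, hc y]
  set e : Fin n → ℤ := fun a => if 0 < B a k then 1 else 0 with he
  have hek : e k = 0 := by simp only [he]; simp [hBkk]
  have he1 : ∀ a, 0 < B a k → e a = 1 := by intro a h; simp only [he]; simp [h]
  have he0 : ∀ a, ¬ 0 < B a k → e a = 0 := by intro a h; simp only [he]; simp [h]
  set A' : Matrix (Fin n) (Fin n) ℤ :=
    Matrix.of fun i j => A i j - (e i + e j - 2 * e i * e j) * (A i k * A k j) with hA'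
  have hA'app : ∀ i j, A' i j = A i j - (e i + e j - 2 * e i * e j) * (A i k * A k j) :=
    fun i j => rfl
  have hmut : ∀ i j, (mutate B k) i j
      = if i = k ∨ j = k then -B i j else B i j + (B i k).sign * max (B i k * B k j) 0 :=
    fun i j => rfl
  -- diagonal entries
  have hdiag' : ∀ i, A' i i = 2 := by
    intro i
    rw [hA'app]
    have : e i = 0 ∨ e i = 1 := by simp only [he]; split <;> simp
    rcases this with h | h <;> rw [h, hdiagA] <;> ring
  -- symmetrizability
  have hsym' : ∀ i j, d i * A' i j = d j * A' j i := by
    intro i j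
    rw [hA'app, hA'app]
    have h1 := hsymd i j
    have h2 := hsymd i k
    have h3 := hsymd j k
    linear_combination h1 - (e i + e j - 2 * e i * e j) * (A k j * h2 - A k i * h3)
  -- the companion property
  have habs' : ∀ i j, i ≠ j → |A' i j| = |(mutate B k) i j| := by
    intro i j hij
    by_cases hik : i = k
    · have hkj : k ≠ j := hik ▸ hij
      rw [hmut, if_pos (Or.inl hik), hik, hA'app, hek, hdiagA]
      have : e j = 0 ∨ e j = 1 := by simp only [he]; split <;> simp
      rcases this with h | h <;> rw [h]
      · rw [show A k j - (0 + 0 - 2 * 0 * 0) * (2 * A k j) = A k j by ring, abs_neg]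
        exact habs k j hkj
      · rw [show A k j - (0 + 1 - 2 * 0 * 1) * (2 * A k j) = -(A k j) by ring,
          abs_neg, abs_neg]
        exact habs k j hkj
    · by_cases hjk : j = k
      · have hik' : i ≠ k := hik
        rw [hmut, if_pos (Or.inr hjk), hjk, hA'app, hek, hdiagA]
        have : e i = 0 ∨ e i = 1 := by simp only [he]; split <;> simp
        rcases this with h | h <;> rw [h]
        · rw [show A i k - (0 + 0 - 2 * 0 * 0) * (A i k * 2) = A i k by ring, abs_neg]
          exact habs i k hik'
        · rw [show A i k - (1 + 0 - 2 * 1 * 0) * (A i k * 2) = -(A i k) by ring,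
            abs_neg, abs_neg]
          exact habs i k hik'
      · -- i ≠ k, j ≠ k
        rw [hmut, if_neg (by tauto), hA'app]
        by_cases hPi : 0 < B i k <;> by_cases hPj : 0 < B j k
        · -- both positive: B k j < 0, product nonpositive
          rw [he1 i hPi, he1 j hPj]
          have hkj : B k j < 0 := hkneg hPj
          rw [max_eq_right (by nlinarith), mul_zero, add_zero,
            show A i j - (1 + 1 - 2 * 1 * 1) * (A i k * A k j) = A i j by ring]
          exact habs i j hij
        · -- B i k > 0, B j k ≤ 0
          rw [he1 i hPi, he0 j hPj,
            show A i j - (1 + 0 - 2 * 1 * 0) * (A i k * A k j) = A i j - A i k * A k j by ring]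
          have hkj : 0 ≤ B k j := hknn (not_lt.mp hPj)
          rw [Int.sign_eq_one_iff_pos.mpr hPi, one_mul, max_eq_left (mul_nonneg hPi.le hkj)]
          rcases eq_or_lt_of_le hkj with hkj0 | hkjpos
          · -- B k j = 0
            rw [← hkj0, mul_zero, add_zero, hA0 (Ne.symm hjk) hkj0.symm, mul_zero, sub_zero]
            exact habs i j hij
          · by_cases hBij : B i j = 0
            · rw [hA0 hij hBij, hBij, zero_sub, zero_add, abs_neg, abs_mul, abs_mul,
                habs i k hik, habs k j (Ne.symm hjk), abs_of_pos hPi, abs_of_pos hkjpos]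
            · -- the triangle case
              have htri := tri_orient hc hskew hcyc hik hij (Ne.symm hjk)
                hPi.ne' hkjpos.ne' (hkne hBij)
              have hBij_neg : B i j < 0 := by
                rcases htri with ⟨_, _, h3⟩ | ⟨h1', _, _⟩
                · exact hkneg h3
                · exact absurd hPi (by omega)
              have hsgn := tri_sign A d hd hsymd hPD hdiagA hij hik hjk
                (hAne0 hij hBij) (hAne0 hjk (hkne hkjpos.ne'))
                (hAne0 (Ne.symm hik) (hkne hPi.ne'))
              have hmulpos : 0 < A i j * (A i k * A k j) := by
                have hp1 := hpairA j k (hAne0 hjk (hkne hkjpos.ne'))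
                have hp2 := hpairA k i (hAne0 (Ne.symm hik) (hkne hPi.ne'))
                have h6 : 0 < (A i j * A j k * A k i) * ((A j k * A k j) * (A k i * A i k)) :=
                  mul_pos hsgn (mul_pos hp1 hp2)
                have heq6 : (A i j * A j k * A k i) * ((A j k * A k j) * (A k i * A i k))
                    = (A i j * (A i k * A k j)) * ((A j k) * (A k i))^2 := by ring
                rw [heq6] at h6
                nlinarith [h6, sq_nonneg (A j k * A k i)]
              rw [abs_sub_of_mul_pos hmulpos, abs_mul, habs i j hij, habs i k hik,
                habs k j (Ne.symm hjk), abs_of_neg hBij_neg, abs_of_pos hPi,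
                abs_of_pos hkjpos,
                show -B i j - B i k * B k j = -(B i j + B i k * B k j) by ring, abs_neg]
        · -- B i k ≤ 0, B j k > 0
          rw [he0 i hPi, he1 j hPj,
            show A i j - (0 + 1 - 2 * 0 * 1) * (A i k * A k j) = A i j - A i k * A k j by ring]
          have hkj : B k j < 0 := hkneg hPj
          rcases eq_or_lt_of_le (not_lt.mp hPi) with hik0 | hikneg
          · -- B i k = 0
            rw [hik0, hA0 hik hik0]
            simp only [Int.sign_zero, zero_mul, add_zero, sub_zero]
            exact habs i j hij
          · rw [Int.sign_eq_neg_one_iff_neg.mpr hikneg,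
              max_eq_left (by nlinarith), show (-1 : ℤ) * (B i k * B k j) = -(B i k * B k j)
                by ring]
            by_cases hBij : B i j = 0
            · rw [hA0 hij hBij, hBij, zero_sub, zero_add, abs_neg, abs_neg, abs_mul, abs_mul,
                habs i k hik, habs k j (Ne.symm hjk), abs_of_neg hikneg, abs_of_neg hkj]
            · have htri := tri_orient hc hskew hcyc hij hik hjk
                hBij hPj.ne' (hkne hikneg.ne)
              have hBij_pos : 0 < B i j := by
                rcases htri with ⟨h1', _, _⟩ | ⟨_, h2', _⟩
                · exact h1'
                · exact absurd hPj (by omega)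
              have hsgn := tri_sign A d hd hsymd hPD hdiagA hij hik hjk
                (hAne0 hij hBij) (hAne0 hjk hPj.ne')
                (hAne0 (Ne.symm hik) (hkne hikneg.ne))
              have hmulpos : 0 < A i j * (A i k * A k j) := by
                have hp1 := hpairA j k (hAne0 hjk hPj.ne')
                have hp2 := hpairA k i (hAne0 (Ne.symm hik) (hkne hikneg.ne))
                have h6 : 0 < (A i j * A j k * A k i) * ((A j k * A k j) * (A k i * A i k)) :=
                  mul_pos hsgn (mul_pos hp1 hp2)
                have heq6 : (A i j * A j k * A k i) * ((A j k * A k j) * (A k i * A i k))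
                    = (A i j * (A i k * A k j)) * ((A j k) * (A k i))^2 := by ring
                rw [heq6] at h6
                nlinarith [h6, sq_nonneg (A j k * A k i)]
              rw [abs_sub_of_mul_pos hmulpos, abs_mul, habs i j hij, habs i k hik,
                habs k j (Ne.symm hjk), abs_of_pos hBij_pos, abs_of_neg hikneg,
                abs_of_neg hkj, show B i j + -(B i k * B k j) = B i j - (-B i k) * (-B k j)
                  by ring]
        · -- both nonpositive
          rw [he0 i hPi, he0 j hPj,
            show A i j - (0 + 0 - 2 * 0 * 0) * (A i k * A k j) = A i j by ring]
          have hkj : 0 ≤ B k j := hknn (not_lt.mp hPj)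
          rw [max_eq_right (by nlinarith [not_lt.mp hPi]), mul_zero, add_zero]
          exact habs i j hij
  -- positive definiteness
  have hPD' : (Matrix.of fun i j => ((d i * A' i j : ℤ) : ℝ)).PosDef := by
    set u : Fin n → ℝ := fun b => ((if 0 < B b k then -(A k b) else 0 : ℤ) : ℝ) with hu
    have huk : u k = 0 := by rw [hu]; simp [hBkk]
    have hcongr := posdef_congr hPD u k huk
    have hEq : (Matrix.of fun i j => ((d i * A' i j : ℤ) : ℝ))
        = ((1 + Matrix.of fun a b => if a = k then u b else 0)ᵀ
            * (Matrix.of fun i j => ((d i * A i j : ℤ) : ℝ))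
            * (1 + Matrix.of fun a b => if a = k then u b else 0)) := by
      ext i j
      rw [congr_entry]
      show ((d i * A' i j : ℤ) : ℝ)
          = ((d i * A i j : ℤ) : ℝ) + u i * ((d k * A k j : ℤ) : ℝ)
            + ((d i * A i k : ℤ) : ℝ) * u j + u i * (((d k * A k k : ℤ) : ℝ) * u j)
      rw [hA'app]
      simp only [hu]
      have hik2 : (d i : ℝ) * (A i k : ℝ) = (d k : ℝ) * (A k i : ℝ) := by
        exact_mod_cast hsymd i k
      have hAkk2 : ((A k k : ℤ) : ℝ) = 2 := by rw [hdiagA]; norm_num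
      by_cases hPi : 0 < B i k <;> by_cases hPj : 0 < B j k
      · rw [he1 i hPi, he1 j hPj, if_pos hPi, if_pos hPj]
        push_cast
        linear_combination ((A k j : ℝ)) * hik2 - ((d k : ℝ) * (A k i) * (A k j)) * hAkk2
      · rw [he1 i hPi, he0 j hPj, if_pos hPi, if_neg hPj]
        push_cast
        linear_combination (-(A k j : ℝ)) * hik2
      · rw [he0 i hPi, he1 j hPj, if_neg hPi, if_pos hPj]
        push_cast
        ring
      · rw [he0 i hPi, he0 j hPj, if_neg hPi, if_neg hPj]
        push_cast
        ring
    rw [hEq]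
    exact hcongr
  exact ⟨A', ⟨⟨hdiag', d, hd, hsym'⟩, habs'⟩, hdiag', d, hd, hsym', hPD'⟩
end
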